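/- arXiv:0904.4521 — 2 statements merged into one kernel-verified Lean document; each statement's English description precedes it below -/
import Mathlib

section
/- Existence of Christ's dyadic cubes (Lemma 5.1). Let (X,d,μ) be a space of homogeneous type. Then there exist a collection {Q_α^k ⊂ X : k∈ℤ, α∈I_k} of open subsets, where each I_k is an index set, and constants δ∈(0,1), C₇>0 and C₈>0, such that: (i) for each fixed k, μ(X∖⋃_{α∈I_k} Q_α^k)=0 and Q_α^k∩Q_β^k=∅ whenever α≠β; (ii) for any α,β,k,ℓ with ℓ≥k, either Q_β^ℓ⊂Q_α^k or Q_β^ℓ∩Q_α^k=∅; (iii) for each (k,α) and each ℓ<k there exists a unique β∈I_ℓ with Q_α^k⊂Q_β^ℓ; (iv) diam(Q_α^k) ≤ C₇δ^k; (v) each Q_α^k contains some ball B(z_α^k,C₈δ^k) with z_α^k∈X. -/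
open MeasureTheory Metric Set Filter
open scoped ENNReal NNReal Topology

namespace RDHardy

variable {X : Type*} [MetricSpace X] [MeasurableSpace X] [BorelSpace X]

/-- The measure of the ball `B(x,r)` as a real number: `V_r(x)`. -/
noncomputable def vol (μ : Measure X) (x : X) (r : ℝ) : ℝ := (μ (ball x r)).toReal

/-- Every ball has finite and positive measure. -/
def BallsFinitePos (μ : Measure X) : Prop :=
  ∀ (x : X) (r : ℝ), 0 < r → 0 < μ (ball x r) ∧ μ (ball x r) < ∞

/-- The doubling property `μ(B(x, λ r)) ≤ C₁ λ^n μ(B(x,r))`. -/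
def Doubling (μ : Measure X) (C₁ n : ℝ) : Prop :=
  ∀ (x : X) (l r : ℝ), 1 ≤ l → 0 < r →
    μ (ball x (l * r)) ≤ ENNReal.ofReal (C₁ * l ^ n) * μ (ball x r)

/-- The reverse doubling property `μ(B(x, C₂ r)) ≥ C₃ μ(B(x,r))` for `0 < r < diam X`. -/
def ReverseDoubling (μ : Measure X) (C₂ C₃ : ℝ) : Prop :=
  ∀ (x : X) (r : ℝ), 0 < r → ENNReal.ofReal r < EMetric.diam (univ : Set X) →
    ENNReal.ofReal C₃ * μ (ball x r) ≤ μ (ball x (C₂ * r))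

/-- An RD-space with `μ(X) = ∞`: doubling, all balls of finite positive measure,
reverse doubling, infinite total measure. -/
structure IsRD (μ : Measure X) (C₁ n C₂ C₃ : ℝ) : Prop where
  one_le_C₁ : 1 ≤ C₁
  n_pos : 0 < n
  balls : BallsFinitePos μ
  doubling : Doubling μ C₁ n
  one_lt_C₂ : 1 < C₂
  one_lt_C₃ : 1 < C₃
  rev : ReverseDoubling μ C₂ C₃
  infinite : μ univ = ∞

/-- The scale `2^{-k}`. -/
noncomputable def sc (k : ℤ) : ℝ := (2 : ℝ) ^ (-k)

/-- The standard size majorant `[V_r(x)+V(x,y)]⁻¹ (r/(r+d(x,y)))^γ`. -/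
noncomputable def sz (μ : Measure X) (x y : X) (r γ : ℝ) : ℝ :=
  (vol μ x r + vol μ x (dist x y))⁻¹ * (r / (r + dist x y)) ^ γ

/-- An `(ε₁, ε₂, ε₃)`-approximation of the identity with constant `C₄`. -/
structure IsAOTI (μ : Measure X) (C₄ ε₁ ε₂ ε₃ : ℝ) (S : ℤ → X → X → ℂ) : Prop where
  meas : ∀ k, Measurable (Function.uncurry (S k))
  size : ∀ (k : ℤ) (x y : X), ‖S k x y‖ ≤ C₄ * sz μ x y (sc k) ε₂
  holder_fst : ∀ (k : ℤ) (x x' y : X), dist x x' ≤ (sc k + dist x y) / 2 →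
    ‖S k x y - S k x' y‖ ≤ C₄ * (dist x x' / (sc k + dist x y)) ^ ε₁ * sz μ x y (sc k) ε₂
  holder_snd : ∀ (k : ℤ) (x y y' : X), dist y y' ≤ (sc k + dist x y) / 2 →
    ‖S k x y - S k x y'‖ ≤ C₄ * (dist y y' / (sc k + dist x y)) ^ ε₁ * sz μ x y (sc k) ε₂
  second_diff : ∀ (k : ℤ) (x x' y y' : X), dist x x' ≤ (sc k + dist x y) / 3 →
    dist y y' ≤ (sc k + dist x y) / 3 →
    ‖S k x y - S k x y' - (S k x' y - S k x' y')‖ ≤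
      C₄ * (dist x x' / (sc k + dist x y)) ^ ε₁ * (dist y y' / (sc k + dist x y)) ^ ε₁ *
        sz μ x y (sc k) ε₃
  int_fst : ∀ (k : ℤ) (y : X), ∫ z, S k z y ∂μ = 1
  int_snd : ∀ (k : ℤ) (x : X), ∫ z, S k x z ∂μ = 1

/-- `S_k(f)(x) = ∫ S_k(x,y) f(y) dμ(y)`. -/
noncomputable def Sop (μ : Measure X) (S : ℤ → X → X → ℂ) (k : ℤ) (f : X → ℂ) (x : X) : ℂ :=
  ∫ y, S k x y * f y ∂μ

/-- The radial maximal function `S⁺(f)(x) = sup_{k∈ℤ} |S_k(f)(x)|`. -/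
noncomputable def radialMax (μ : Measure X) (S : ℤ → X → X → ℂ) (f : X → ℂ) (x : X) : ℝ≥0∞ :=
  ⨆ k : ℤ, ENNReal.ofReal ‖Sop μ S k f x‖

/-- The localized radial maximal function `S⁺_ℓ(f)(x) = sup_{k ≥ ℓ} |S_k(f)(x)|`. -/
noncomputable def radialMaxLoc (μ : Measure X) (S : ℤ → X → X → ℂ) (ℓ : ℤ) (f : X → ℂ)
    (x : X) : ℝ≥0∞ :=
  ⨆ (k : ℤ) (_ : ℓ ≤ k), ENNReal.ofReal ‖Sop μ S k f x‖

/-- `S_k^{(a)}(f)(x) = V_{a 2^{-k}}(x)⁻¹ ∫_{B(x, a 2^{-k})} |S_k(f)(y)| dμ(y)`. -/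
noncomputable def radialAvg (μ : Measure X) (S : ℤ → X → X → ℂ) (a : ℝ) (k : ℤ) (f : X → ℂ)
    (x : X) : ℝ≥0∞ :=
  (μ (ball x (a * sc k)))⁻¹ *
    ∫⁻ y in ball x (a * sc k), ENNReal.ofReal ‖Sop μ S k f y‖ ∂μ

/-- `TestBound μ x r β γ φ C` says that `‖φ‖_{G(x,r,β,γ)} ≤ C`, i.e. `C` is an admissible
constant in the size and regularity conditions defining the space of test functions. -/
def TestBound (μ : Measure X) (x : X) (r β γ : ℝ) (φ : X → ℂ) (C : ℝ) : Prop :=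
  (∀ y : X, ‖φ y‖ ≤ C * sz μ x y r γ) ∧
  ∀ y y' : X, dist y y' ≤ (r + dist x y) / 2 →
    ‖φ y - φ y'‖ ≤ C * (dist y y' / (r + dist x y)) ^ β * sz μ x y r γ

/-- The grand maximal function `G(f)(x)`. -/
noncomputable def grandMax (μ : Measure X) (ε β γ : ℝ) (f : X → ℂ) (x : X) : ℝ≥0∞ :=
  ⨆ (r : ℝ) (_ : 0 < r) (φ : X → ℂ)
    (_ : ∃ C : ℝ, 0 ≤ C ∧ TestBound μ x r ε ε φ C) (_ : TestBound μ x r β γ φ 1),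
    ENNReal.ofReal ‖∫ z, f z * φ z ∂μ‖

/-- The localized grand maximal function `G_ℓ(f)(x)` (radii restricted to `(0, 2^{-ℓ}]`). -/
noncomputable def grandMaxLoc (μ : Measure X) (ε β γ : ℝ) (ℓ : ℤ) (f : X → ℂ)
    (x : X) : ℝ≥0∞ :=
  ⨆ (r : ℝ) (_ : 0 < r ∧ r ≤ sc ℓ) (φ : X → ℂ)
    (_ : ∃ C : ℝ, 0 ≤ C ∧ TestBound μ x r ε ε φ C) (_ : TestBound μ x r β γ φ 1),
    ENNReal.ofReal ‖∫ z, f z * φ z ∂μ‖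

/-- `L^p` quasi-norm (with `0 < p ≤ 1`) of an `ℝ≥0∞`-valued function. -/
noncomputable def lpNorm (μ : Measure X) (p : ℝ) (g : X → ℝ≥0∞) : ℝ≥0∞ :=
  (∫⁻ x, g x ^ p ∂μ) ^ (1 / p)

/-- The Hardy–Littlewood maximal function of an `ℝ≥0∞`-valued function. -/
noncomputable def HL (μ : Measure X) (g : X → ℝ≥0∞) (x : X) : ℝ≥0∞ :=
  ⨆ (r : ℝ) (_ : 0 < r), (μ (ball x r))⁻¹ * ∫⁻ y in ball x r, g y ∂μ

namespace Christ

open scoped Classical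

/-- The scale `8⁻¹ ^ k`. -/
noncomputable def dy (k : ℤ) : ℝ := (8 : ℝ)⁻¹ ^ k

lemma dy_pos (k : ℤ) : 0 < dy k := zpow_pos (by norm_num) k

lemma dy_antitone {k l : ℤ} (h : k ≤ l) : dy l ≤ dy k :=
  zpow_le_zpow_right_of_le_one₀ (by norm_num) (by norm_num) h

lemma dy_succ (k : ℤ) : dy (k + 1) = dy k * 8⁻¹ := by
  unfold dy; rw [zpow_add_one₀ (by norm_num : ((8:ℝ)⁻¹) ≠ 0)]

lemma dy_neg_nat (m : ℕ) : dy (-((m:ℤ)+1)) = dy (-(m:ℤ)) * 8 := by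
  have h := dy_succ (-(m:ℤ)-1)
  have h2 : (-(m:ℤ)-1) + 1 = -(m:ℤ) := by ring
  rw [h2] at h
  rw [show -((m:ℤ)+1) = -(m:ℤ)-1 by ring, h]
  ring

variable {X : Type*} [MetricSpace X]

/-- Maximal separated nets via Zorn. -/
lemma exists_net {r : ℝ} (hr : 0 < r) (A T : Set X) (hTA : T ⊆ A)
    (hT : T.Pairwise fun a b => r ≤ dist a b) :
    ∃ N, T ⊆ N ∧ N ⊆ A ∧ (N.Pairwise fun a b => r ≤ dist a b) ∧
      ∀ x ∈ A, ∃ y ∈ N, dist x y < r := by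
  have hch : ∀ c ⊆ {s : Set X | T ⊆ s ∧ s ⊆ A ∧ s.Pairwise fun a b => r ≤ dist a b},
      IsChain (· ⊆ ·) c → c.Nonempty →
      ∃ ub ∈ {s : Set X | T ⊆ s ∧ s ⊆ A ∧ s.Pairwise fun a b => r ≤ dist a b},
        ∀ s ∈ c, s ⊆ ub := by
    intro c hcS hchain hcne
    refine ⟨⋃₀ c, ⟨?_, ?_, ?_⟩, fun s hs => Set.subset_sUnion_of_mem hs⟩
    · obtain ⟨s, hs⟩ := hcne
      exact (hcS hs).1.trans (Set.subset_sUnion_of_mem hs)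
    · exact Set.sUnion_subset fun s hs => (hcS hs).2.1
    · intro a ha b hb hab
      obtain ⟨s, hs, has⟩ := ha
      obtain ⟨t, ht, hbt⟩ := hb
      rcases hchain.total hs ht with hst | hts
      · exact (hcS ht).2.2 (hst has) hbt hab
      · exact (hcS hs).2.2 has (hts hbt) hab
  obtain ⟨m, hTm, hm⟩ := zorn_subset_nonempty
      {s : Set X | T ⊆ s ∧ s ⊆ A ∧ s.Pairwise fun a b => r ≤ dist a b} hch T ⟨Subset.rfl, hTA, hT⟩
  · refine ⟨m, hTm, hm.prop.2.1, hm.prop.2.2, ?_⟩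
    intro x hxA
    by_contra h
    push_neg at h
    have hxm : x ∉ m := by
      intro hx
      have := h x hx
      simp only [dist_self] at this
      linarith
    have hins : insert x m ∈ {s : Set X | T ⊆ s ∧ s ⊆ A ∧ s.Pairwise fun a b => r ≤ dist a b} := by
      refine ⟨hTm.trans (Set.subset_insert _ _), Set.insert_subset hxA hm.prop.2.1, ?_⟩
      have hsymm : Symmetric (fun a b : X => r ≤ dist a b) := fun a b hab => by simp only [dist_comm b a]; exact hab
      haveI : Std.Symm (fun a b : X => r ≤ dist a b) := ⟨fun a b h => hsymm h⟩
      exact (Set.pairwise_insert_of_symm (r := fun a b : X => r ≤ dist a b)).2 ⟨hm.prop.2.2, fun y hy _ => h y hy⟩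
    exact hxm (hm.2 hins (Set.subset_insert _ _) (Set.mem_insert _ _))

variable [MeasurableSpace X] [BorelSpace X]

/-- A separated set in a ball is finite, in a space of homogeneous type. -/
lemma finite_sep_ball (μ : MeasureTheory.Measure X) (C₁ n : ℝ)
    (hC₁ : 1 ≤ C₁) (hballs : RDHardy.BallsFinitePos μ) (hdoub : RDHardy.Doubling μ C₁ n)
    {r : ℝ} (hr : 0 < r) {S : Set X}
    (hS : S.Pairwise fun a b => r ≤ dist a b) (x : X) (R : ℝ) :
    (S ∩ Metric.ball x R).Finite := by
  rcases le_or_gt R 0 with hR | hR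
  · rw [Metric.ball_eq_empty.2 hR, Set.inter_empty]
    exact Set.finite_empty
  · set lam : ℝ := (4 * R + 2 * r) / r with hlam
    have hlam1 : 1 ≤ lam := by
      rw [hlam, le_div_iff₀ hr]
      linarith
    have hlampos : 0 < C₁ * lam ^ n := by
      have : (0:ℝ) < lam := by positivity
      have h1 : (0:ℝ) < lam ^ n := Real.rpow_pos_of_pos this n
      nlinarith [h1, hC₁]
    set ε : ENNReal := μ (Metric.ball x (R + r)) / ENNReal.ofReal (C₁ * lam ^ n) with hε
    have hbig := hballs x (R + r) (by linarith)
    have hεpos : 0 < ε := ENNReal.div_pos hbig.1.ne' ENNReal.ofReal_ne_top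
    have hkey : ∀ y : X, y ∈ S ∩ Metric.ball x R → ε ≤ μ (Metric.ball y (r / 2)) := by
      intro y hy
      refine ENNReal.div_le_of_le_mul ?_
      have hsub : Metric.ball x (R + r) ⊆ Metric.ball y (lam * (r / 2)) := by
        have : lam * (r / 2) = 2 * R + r := by
          rw [hlam]
          field_simp
          ring
        rw [this]
        intro z hz
        have h1 : dist z x < R + r := Metric.mem_ball.1 hz
        have h2 : dist y x < R := Metric.mem_ball.1 hy.2
        have := dist_triangle z x y
        rw [Metric.mem_ball]
        rw [dist_comm] at h2
        linarith [dist_comm x y ▸ h2]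
      calc μ (Metric.ball x (R + r)) ≤ μ (Metric.ball y (lam * (r / 2))) := MeasureTheory.measure_mono hsub
        _ ≤ ENNReal.ofReal (C₁ * lam ^ n) * μ (Metric.ball y (r / 2)) :=
            hdoub y lam (r / 2) hlam1 (by linarith)
        _ = μ (Metric.ball y (r / 2)) * ENNReal.ofReal (C₁ * lam ^ n) := mul_comm _ _
    have hdisj : Pairwise (Function.onFun Disjoint
        (fun y : ↥(S ∩ Metric.ball x R) => Metric.ball (y : X) (r / 2))) := by
      intro i j hij
      have hne : (i : X) ≠ (j : X) := fun h => hij (Subtype.ext h)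
      have hd : r ≤ dist (i : X) (j : X) := hS i.2.1 j.2.1 hne
      exact Metric.ball_disjoint_ball (by linarith)
    have hunion : μ (⋃ y : ↥(S ∩ Metric.ball x R), Metric.ball (y : X) (r / 2)) ≠ ⊤ := by
      refine (lt_of_le_of_lt (MeasureTheory.measure_mono ?_) hbig.2).ne
      refine Set.iUnion_subset fun y => ?_
      intro z hz
      have h1 : dist z (y : X) < r / 2 := Metric.mem_ball.1 hz
      have h2 : dist (y : X) x < R := Metric.mem_ball.1 y.2.2
      have := dist_triangle z (y : X) x
      rw [Metric.mem_ball]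
      linarith
    have hfin := MeasureTheory.Measure.finite_const_le_meas_of_disjoint_iUnion μ hεpos
      (fun _ => measurableSet_ball) hdisj hunion
    have : (Set.univ : Set ↥(S ∩ Metric.ball x R)).Finite := by
      refine hfin.subset fun y _ => ?_
      exact hkey y y.2
    haveI : Finite ↥(S ∩ Metric.ball x R) := Set.finite_univ_iff.1 this
    exact Set.toFinite _

end Christ
namespace Christ

variable {X : Type*} [MetricSpace X]

/-- A hierarchical family of nets with nearest-parent maps (Christ's construction data). -/
structure CS (X : Type*) [MetricSpace X] where
  N : ℤ → Set X
  sep : ∀ k : ℤ, (N k).Pairwise fun a b => dy k ≤ dist a b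
  dens : ∀ (k : ℤ) (x : X), ∃ y ∈ N k, dist x y < 2 * dy k
  mono : ∀ ⦃k l : ℤ⦄, k ≤ l → N k ⊆ N l
  fin : ∀ (k : ℤ) (x : X) (R : ℝ), (N k ∩ Metric.ball x R).Finite
  par : ℤ → X → X
  par_mem : ∀ (k : ℤ) (u : X), par k u ∈ N k
  par_dist : ∀ (k : ℤ) (u : X), dist u (par k u) ≤ 2 * dy k
  par_close : ∀ (k : ℤ) (u : X) ⦃z : X⦄, z ∈ N k → dist u z < dy k / 2 → par k u = z

lemma exists_CS [MeasurableSpace X] [BorelSpace X] (μ : MeasureTheory.Measure X) (C₁ n : ℝ)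
    (hC₁ : 1 ≤ C₁) (hballs : RDHardy.BallsFinitePos μ) (hdoub : RDHardy.Doubling μ C₁ n) :
    Nonempty (CS X) := by
  classical
  obtain ⟨N0, -, -, hN0sep, hN0dense⟩ :=
    exists_net (dy_pos 0) (Set.univ : Set X) ∅ (Set.empty_subset _) (Set.pairwise_empty _)
  have hup : ∀ (m : ℕ) (s : Set X), (s.Pairwise fun a b => dy (m:ℤ) ≤ dist a b) →
      ∃ t, s ⊆ t ∧ (t.Pairwise fun a b => dy ((m:ℤ)+1) ≤ dist a b) ∧
        ∀ x : X, ∃ y ∈ t, dist x y < dy ((m:ℤ)+1) := by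
    intro m s hs
    obtain ⟨t, hst, -, hsep, hdens⟩ := exists_net (dy_pos ((m:ℤ)+1)) (Set.univ : Set X) s
      (Set.subset_univ _) (hs.mono' fun a b h => le_trans (dy_antitone (by omega)) h)
    exact ⟨t, hst, hsep, fun x => hdens x (Set.mem_univ x)⟩
  choose upf hup1 hup2 hup3 using hup
  have hdn : ∀ (m : ℕ) (s : Set X), (s.Pairwise fun a b => dy (-(m:ℤ)) ≤ dist a b) →
      ∃ t, t ⊆ s ∧ (t.Pairwise fun a b => dy (-((m:ℤ)+1)) ≤ dist a b) ∧
        ∀ x ∈ s, ∃ y ∈ t, dist x y < dy (-((m:ℤ)+1)) := by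
    intro m s _
    obtain ⟨t, -, hts, hsep, hdens⟩ := exists_net (dy_pos (-((m:ℤ)+1))) s ∅
      (Set.empty_subset _) (Set.pairwise_empty _)
    exact ⟨t, hts, hsep, hdens⟩
  choose dnf hdn1 hdn2 hdn3 using hdn
  have castS : ∀ (m : ℕ) (s : Set X), (s.Pairwise fun a b => dy ((m:ℤ)+1) ≤ dist a b) →
      s.Pairwise fun a b => dy ((m+1 : ℕ) : ℤ) ≤ dist a b := by
    intro m s h
    have : ((m+1 : ℕ) : ℤ) = (m:ℤ)+1 := by push_cast; ring
    rw [this]; exact h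
  have castS0 : (N0.Pairwise fun a b => dy 0 ≤ dist a b) →
      N0.Pairwise fun a b => dy ((0 : ℕ) : ℤ) ≤ dist a b := by
    intro h; rwa [Nat.cast_zero]
  have castN : ∀ (m : ℕ) (s : Set X), (s.Pairwise fun a b => dy (-((m:ℤ)+1)) ≤ dist a b) →
      s.Pairwise fun a b => dy (-((m+1 : ℕ) : ℤ)) ≤ dist a b := by
    intro m s h
    have : (-((m+1 : ℕ) : ℤ)) = -((m:ℤ)+1) := by push_cast; ring
    rw [this]; exact h
  have castN0 : (N0.Pairwise fun a b => dy 0 ≤ dist a b) →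
      N0.Pairwise fun a b => dy (-((0 : ℕ) : ℤ)) ≤ dist a b := by
    intro h; rwa [Nat.cast_zero, neg_zero]
  let FA : ∀ m : ℕ, {s : Set X // s.Pairwise fun a b => dy (m:ℤ) ≤ dist a b} := fun m =>
    Nat.rec (motive := fun m => {s : Set X // s.Pairwise fun a b => dy (m:ℤ) ≤ dist a b})
      ⟨N0, castS0 hN0sep⟩ (fun m p => ⟨upf m p.1 p.2, castS m _ (hup2 m p.1 p.2)⟩) m
  let FB : ∀ m : ℕ, {s : Set X // s.Pairwise fun a b => dy (-(m:ℤ)) ≤ dist a b} := fun m =>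
    Nat.rec (motive := fun m => {s : Set X // s.Pairwise fun a b => dy (-(m:ℤ)) ≤ dist a b})
      ⟨N0, castN0 hN0sep⟩ (fun m p => ⟨dnf m p.1 p.2, castN m _ (hdn2 m p.1 p.2)⟩) m
  have FAchain : ∀ m : ℕ, (FA m).1 ⊆ (FA (m+1)).1 := fun m => hup1 m (FA m).1 (FA m).2
  have FBchain : ∀ m : ℕ, (FB (m+1)).1 ⊆ (FB m).1 := fun m => hdn1 m (FB m).1 (FB m).2
  have FAdens : ∀ (m : ℕ) (x : X), ∃ y ∈ (FA m).1, dist x y < dy (m:ℤ) := by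
    intro m x
    cases m with
    | zero =>
        obtain ⟨y, hy, hd⟩ := hN0dense x (Set.mem_univ x)
        refine ⟨y, hy, ?_⟩
        rwa [Nat.cast_zero]
    | succ m =>
        obtain ⟨y, hy, hd⟩ := hup3 m (FA m).1 (FA m).2 x
        refine ⟨y, hy, ?_⟩
        rwa [show ((m+1 : ℕ) : ℤ) = (m:ℤ)+1 by push_cast; ring]
  have FBdens : ∀ (m : ℕ) (x : X), ∃ y ∈ (FB m).1, dist x y < 2 * dy (-(m:ℤ)) := by
    intro m
    induction m with
    | zero =>
        intro x
        obtain ⟨y, hy, hd⟩ := hN0dense x (Set.mem_univ x)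
        refine ⟨y, hy, ?_⟩
        rw [Nat.cast_zero, neg_zero]
        have := dy_pos 0
        linarith
    | succ m ih =>
        intro x
        obtain ⟨y, hy, hd⟩ := ih x
        obtain ⟨z, hz, hd2⟩ := hdn3 m (FB m).1 (FB m).2 y hy
        refine ⟨z, hz, ?_⟩
        have h8 : dy (-((m:ℤ)+1)) = dy (-(m:ℤ)) * 8 := dy_neg_nat m
        have hc : (-((m+1 : ℕ) : ℤ)) = -((m:ℤ)+1) := by push_cast; ring
        rw [hc, h8]
        have := dist_triangle x y z
        have hp := dy_pos (-(m:ℤ))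
        rw [h8] at hd2
        linarith
  let NN : ℤ → Set X := fun k => if h : 0 ≤ k then (FA k.toNat).1 else (FB (-k).toNat).1
  have pw_cast : ∀ {j j' : ℤ}, j = j' → ∀ {s : Set X},
      (s.Pairwise fun a b => dy j ≤ dist a b) → s.Pairwise fun a b => dy j' ≤ dist a b := by
    intro j j' h s hs
    subst h
    exact hs
  have hsep : ∀ k : ℤ, (NN k).Pairwise fun a b => dy k ≤ dist a b := by
    intro k
    by_cases h : 0 ≤ k
    · have h2 := pw_cast (show ((k.toNat : ℤ)) = k by omega) (FA k.toNat).2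
      simpa only [NN, dif_pos h] using h2
    · have h2 := pw_cast (show (-((-k).toNat : ℤ)) = k by omega) (FB (-k).toNat).2
      simpa only [NN, dif_neg h] using h2
  have hdens : ∀ (k : ℤ) (x : X), ∃ y ∈ NN k, dist x y < 2 * dy k := by
    intro k x
    by_cases h : 0 ≤ k
    · obtain ⟨y, hy, hd⟩ := FAdens k.toNat x
      have he : dy ((k.toNat : ℤ)) = dy k := by rw [Int.toNat_of_nonneg h]
      rw [he] at hd
      refine ⟨y, by simpa only [NN, dif_pos h] using hy, ?_⟩
      have := dy_pos k
      linarith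
    · obtain ⟨y, hy, hd⟩ := FBdens (-k).toNat x
      have he : dy (-((-k).toNat : ℤ)) = dy k := by rw [Int.toNat_of_nonneg (by omega), neg_neg]
      rw [he] at hd
      exact ⟨y, by simpa only [NN, dif_neg h] using hy, hd⟩
  have hmono1 : ∀ k : ℤ, NN k ⊆ NN (k+1) := by
    intro k
    rcases le_or_gt 0 k with h | h
    · have h1 : (0:ℤ) ≤ k + 1 := by omega
      have h2 : (k+1).toNat = k.toNat + 1 := by omega
      simp only [NN, dif_pos h, dif_pos h1]
      rw [h2]
      exact FAchain k.toNat
    · rcases eq_or_lt_of_le (show k ≤ -1 by omega) with he | hlt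
      · subst he
        have h2 : ((-(-1:ℤ)).toNat) = 1 := by norm_num
        simp only [NN, dif_neg (by norm_num : ¬ (0:ℤ) ≤ -1), dif_pos (by norm_num : (0:ℤ) ≤ -1+1), h2]
        have h3 : ((-1:ℤ)+1).toNat = 0 := by norm_num
        rw [h3]
        exact FBchain 0
      · have h1 : ¬ (0:ℤ) ≤ k + 1 := by omega
        have h2 : (-k).toNat = (-(k+1)).toNat + 1 := by omega
        simp only [NN, dif_neg (by omega : ¬ (0:ℤ) ≤ k), dif_neg h1]
        rw [h2]
        exact FBchain (-(k+1)).toNat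
  have hmono : ∀ ⦃k l : ℤ⦄, k ≤ l → NN k ⊆ NN l := by
    intro k l hkl
    have key : ∀ m : ℕ, NN k ⊆ NN (k + (m:ℤ)) := by
      intro m
      induction m with
      | zero => rw [show k + ((0:ℕ):ℤ) = k by push_cast; ring]
      | succ m ih =>
          rw [show k + ((m+1:ℕ):ℤ) = (k + (m:ℤ)) + 1 by push_cast; ring]
          exact ih.trans (hmono1 (k + (m:ℤ)))
    have he : l = k + (((l - k).toNat : ℕ) : ℤ) := by omega
    rw [he]
    exact key _
  have hfin : ∀ (k : ℤ) (x : X) (R : ℝ), (NN k ∩ Metric.ball x R).Finite :=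
    fun k x R => finite_sep_ball μ C₁ n hC₁ hballs hdoub (dy_pos k) (hsep k) x R
  have hpar : ∀ (k : ℤ) (u : X), ∃ z, z ∈ NN k ∧ dist u z ≤ 2 * dy k ∧
      ∀ w ∈ NN k, dist u w ≤ 2 * dy k → dist u z ≤ dist u w := by
    intro k u
    have hfin2 : (NN k ∩ Metric.closedBall u (2 * dy k)).Finite := by
      refine (hfin k u (3 * dy k)).subset ?_
      intro y hy
      have h1 : dist y u ≤ 2 * dy k := Metric.mem_closedBall.1 hy.2
      have := dy_pos k
      exact ⟨hy.1, Metric.mem_ball.2 (by linarith)⟩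
    obtain ⟨y, hy, hd⟩ := hdens k u
    have hne : (NN k ∩ Metric.closedBall u (2 * dy k)).Nonempty :=
      ⟨y, hy, Metric.mem_closedBall.2 (by rw [dist_comm]; linarith)⟩
    obtain ⟨z, hz, hmin⟩ := Set.exists_min_image _ (fun w => dist u w) hfin2 hne
    refine ⟨z, hz.1, Metric.mem_closedBall'.1 hz.2, ?_⟩
    intro w hw hwd
    exact hmin w ⟨hw, Metric.mem_closedBall.2 (by rw [dist_comm]; exact hwd)⟩
  choose parf hp1 hp2 hp3 using hpar
  have hpclose : ∀ (k : ℤ) (u : X) ⦃z : X⦄, z ∈ NN k → dist u z < dy k / 2 → parf k u = z := by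
    intro k u z hz hd
    have hdy := dy_pos k
    have h1 : dist u (parf k u) ≤ dist u z := hp3 k u z hz (by linarith)
    by_contra hne
    have h2 : dy k ≤ dist (parf k u) z := hsep k (hp1 k u) hz hne
    have h3 := dist_triangle (parf k u) u z
    rw [dist_comm (parf k u) u] at h3
    linarith
  exact ⟨⟨NN, hsep, hdens, hmono, hfin, parf, hp1, hp2, hpclose⟩⟩

end Christ
namespace Christ
namespace CS

variable {X : Type*} [MetricSpace X] (G : CS X)

/-- Iterated parent: `m` steps up from level `l`. -/
def ancN (G : CS X) : ℕ → ℤ → X → X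
  | 0, _, u => u
  | (m+1), l, u => G.par (l - (m+1)) (G.ancN m l u)

/-- The ancestor of `u` at level `k`, seen from level `l`. -/
def anc (k l : ℤ) (u : X) : X := G.ancN (l - k).toNat l u

lemma ancN_succ (m : ℕ) (l : ℤ) (u : X) :
    G.ancN (m+1) l u = G.par (l - (m+1)) (G.ancN m l u) := rfl

lemma anc_same (l : ℤ) (u : X) : G.anc l l u = u := by
  unfold anc
  rw [show (l - l).toNat = 0 by omega]
  rfl

lemma anc_step {k l : ℤ} (h : k < l) (u : X) :
    G.anc k l u = G.par k (G.anc (k+1) l u) := by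
  unfold anc
  rw [show (l - k).toNat = (l - (k+1)).toNat + 1 by omega, ancN_succ]
  rw [show l - ((((l - (k+1)).toNat : ℕ) : ℤ) + 1) = k by omega]

lemma anc_mem {k l : ℤ} (h : k ≤ l) {u : X} (hu : u ∈ G.N l) : G.anc k l u ∈ G.N k := by
  rcases eq_or_lt_of_le h with he | hlt
  · subst he
    rwa [anc_same]
  · rw [anc_step G hlt]
    exact G.par_mem _ _

lemma ancN_dist (l : ℤ) (u : X) : ∀ m : ℕ,
    dist u (G.ancN m l u) ≤ 16/7 * (dy (l - m) - dy l) := by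
  intro m
  induction m with
  | zero =>
      simp only [ancN, dist_self]
      rw [show l - ((0:ℕ):ℤ) = l by push_cast; ring]
      linarith
  | succ m ih =>
      rw [ancN_succ]
      have htri := dist_triangle u (G.ancN m l u) (G.par (l - ((m:ℤ)+1)) (G.ancN m l u))
      have hpd := G.par_dist (l - ((m:ℤ)+1)) (G.ancN m l u)
      have he : (l - (m:ℤ)) = (l - ((m:ℤ)+1)) + 1 := by ring
      rw [he, dy_succ] at ih
      push_cast
      linarith
  

lemma anc_dist {k l : ℤ} (h : k ≤ l) (u : X) :
    dist u (G.anc k l u) ≤ 16/7 * (dy k - dy l) := by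
  have h2 := ancN_dist G l u (l - k).toNat
  rwa [show (l - (((l - k).toNat : ℕ) : ℤ)) = k by omega] at h2

lemma anc_dist' {k l : ℤ} (h : k ≤ l) (u : X) : dist u (G.anc k l u) ≤ 3 * dy k := by
  have h1 := anc_dist G h u
  have h2 := dy_pos l
  have h3 := dy_pos k
  linarith

lemma anc_self {k l : ℤ} (h : k ≤ l) {u : X} (hu : u ∈ G.N k) : G.anc k l u = u := by
  have key : ∀ (m : ℕ) (k' : ℤ), k' + m = l → u ∈ G.N k' → G.anc k' l u = u := by
    intro m
    induction m with
    | zero =>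
        intro k' hk' _
        have he : k' = l := by omega
        rw [he]
        exact anc_same G l u
    | succ m ih =>
        intro k' hk' hu'
        have hlt : k' < l := by omega
        rw [anc_step G hlt]
        rw [ih (k'+1) (by omega) (G.mono (by omega) hu')]
        exact G.par_close k' u hu' (by simpa [dist_self] using half_pos (dy_pos k'))
  exact key (l - k).toNat k (by omega) hu

lemma anc_comp {k l m : ℤ} (hkl : k ≤ l) (hlm : l ≤ m) (u : X) :
    G.anc k l (G.anc l m u) = G.anc k m u := by
  have key : ∀ (j : ℕ) (k' : ℤ), k' + j = l → G.anc k' l (G.anc l m u) = G.anc k' m u := by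
    intro j
    induction j with
    | zero =>
        intro k' hk'
        have : k' = l := by omega
        subst this
        rw [anc_same]
    | succ j ih =>
        intro k' hk'
        have hlt : k' < l := by omega
        have hltm : k' < m := by omega
        rw [anc_step G hlt, anc_step G hltm, ih (k'+1) (by omega)]
  exact key (l - k).toNat k (by omega)

lemma anc_far {k l : ℤ} (h : k ≤ l) {u z : X} (hu : u ∈ G.N l) (hz : z ∈ G.N k)
    (hne : G.anc k l u ≠ z) : 3/14 * dy k ≤ dist u z := by
  rcases eq_or_lt_of_le h with he | hlt
  · subst he
    rw [anc_same] at hne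
    have h1 := G.sep k hu hz hne
    have h2 := dy_pos k
    linarith
  · have hstep : G.anc k l u = G.par k (G.anc (k+1) l u) := anc_step G hlt u
    have hwz : ¬ dist (G.anc (k+1) l u) z < dy k / 2 := by
      intro hcl
      exact hne (hstep.trans (G.par_close k _ hz hcl))
    push_neg at hwz
    have hd : dist u (G.anc (k+1) l u) ≤ 16/7 * (dy (k+1) - dy l) := anc_dist G (by omega) u
    have h8 : dy (k+1) = dy k * 8⁻¹ := dy_succ k
    have htri := dist_triangle (G.anc (k+1) l u) u z
    rw [dist_comm (G.anc (k+1) l u) u] at htri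
    have := dy_pos l
    linarith

/-- The set of descendants of a net point `z` at level `k`. -/
def T (k : ℤ) (z : X) : Set X := {x | ∃ l, k ≤ l ∧ x ∈ G.N l ∧ G.anc k l x = z}

/-- The closed dyadic cube. -/
def Qc (k : ℤ) (z : X) : Set X := closure (G.T k z)

/-- The open dyadic cube. -/
def Qo (k : ℤ) (z : X) : Set X :=
  (⋃ w : {w : ↥(G.N k) // (w : X) ≠ z}, G.Qc k ((w : ↥(G.N k)) : X))ᶜ

lemma T_subset (k : ℤ) (z : X) : G.T k z ⊆ Metric.closedBall z (3 * dy k) := by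
  rintro x ⟨l, hkl, hxl, hanc⟩
  have := anc_dist' G hkl x
  rw [hanc] at this
  exact Metric.mem_closedBall.2 this

lemma Qc_subset (k : ℤ) (z : X) : G.Qc k z ⊆ Metric.closedBall z (3 * dy k) :=
  closure_minimal (T_subset G k z) Metric.isClosed_closedBall

lemma self_mem_T {k : ℤ} {z : X} (hz : z ∈ G.N k) : z ∈ G.T k z :=
  ⟨k, le_refl k, hz, anc_same G k z⟩

lemma T_decomp {k l : ℤ} (h : k ≤ l) (z : X) :
    G.T k z ⊆ ⋃ w : {w : ↥(G.N l) // G.anc k l (w : X) = z}, G.T l ((w : ↥(G.N l)) : X) := by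
  rintro x ⟨j, hkj, hxj, hanc⟩
  rcases le_or_gt l j with hlj | hjl
  · have hw : G.anc l j x ∈ G.N l := anc_mem G hlj hxj
    have hc : G.anc k l (G.anc l j x) = z := by rw [anc_comp G h hlj]; exact hanc
    exact Set.mem_iUnion.2 ⟨⟨⟨_, hw⟩, hc⟩, ⟨j, hlj, hxj, rfl⟩⟩
  · have hxl : x ∈ G.N l := G.mono hjl.le hxj
    have hc : G.anc k l x = z := by
      have h1 := anc_comp G hkj hjl.le x
      rw [anc_self G hjl.le hxj] at h1
      rw [← h1]
      exact hanc
    exact Set.mem_iUnion.2 ⟨⟨⟨x, hxl⟩, hc⟩, ⟨l, le_refl l, hxl, anc_same G l x⟩⟩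

lemma locfin (k : ℤ) : LocallyFinite (fun w : ↥(G.N k) => G.Qc k (w : X)) := by
  intro x
  refine ⟨Metric.ball x (dy k), Metric.ball_mem_nhds x (dy_pos k), ?_⟩
  have hsub : {w : ↥(G.N k) | (G.Qc k (w : X) ∩ Metric.ball x (dy k)).Nonempty} ⊆
      Subtype.val ⁻¹' (G.N k ∩ Metric.ball x (5 * dy k)) := by
    rintro w ⟨y, hy1, hy2⟩
    have h1 : dist y (w : X) ≤ 3 * dy k := Metric.mem_closedBall.1 (Qc_subset G k _ hy1)
    have h2 : dist y x < dy k := Metric.mem_ball.1 hy2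
    refine ⟨w.2, Metric.mem_ball.2 ?_⟩
    have h3 := dist_triangle (w : X) y x
    rw [dist_comm (w : X) y] at h3
    have := dy_pos k
    linarith
  exact ((G.fin k x (5 * dy k)).preimage Subtype.val_injective.injOn).subset hsub

lemma isOpen_Qo (k : ℤ) (z : X) : IsOpen (G.Qo k z) :=
  (LocallyFinite.isClosed_iUnion ((locfin G k).comp_injective Subtype.val_injective)
    (fun _ => isClosed_closure)).isOpen_compl

lemma cover (k : ℤ) (x : X) : ∃ z ∈ G.N k, x ∈ G.Qc k z := by
  classical
  have hw : ∀ m : ℕ, ∃ y ∈ G.N (k + m), dist x y < 2 * dy (k + m) := fun m => G.dens _ x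
  choose y hy1 hy2 using hw
  have ha : ∀ m : ℕ, G.anc k (k + m) (y m) ∈ G.N k ∩ Metric.ball x (6 * dy k) := by
    intro m
    have h1 : dist (y m) (G.anc k (k + m) (y m)) ≤ 3 * dy k := anc_dist' G (by omega) (y m)
    have h2 := hy2 m
    have h3 : dy (k + m) ≤ dy k := dy_antitone (by omega)
    refine ⟨anc_mem G (by omega) (hy1 m), Metric.mem_ball.2 ?_⟩
    have h4 := dist_triangle x (y m) (G.anc k (k + m) (y m))
    rw [dist_comm (G.anc k (k + m) (y m)) x]
    have := dy_pos k
    linarith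
  have hfin : (G.N k ∩ Metric.ball x (6 * dy k)).Finite := G.fin k x (6 * dy k)
  haveI : Finite ↥(G.N k ∩ Metric.ball x (6 * dy k)) := hfin.to_subtype
  let f : ℕ → ↥(G.N k ∩ Metric.ball x (6 * dy k)) := fun m => ⟨G.anc k (k + m) (y m), ha m⟩
  obtain ⟨zs, hzs⟩ := Finite.exists_infinite_fiber f
  refine ⟨(zs : X), zs.2.1, ?_⟩
  rw [Qc, Metric.mem_closure_iff]
  intro ε hε
  obtain ⟨q, hq⟩ : ∃ q : ℕ, 2 * dy (k + q) < ε := by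
    have hd := dy_pos k
    obtain ⟨q, hq⟩ := exists_pow_lt_of_lt_one (show (0:ℝ) < ε / (2 * dy k) by positivity)
      (by norm_num : (8:ℝ)⁻¹ < 1)
    refine ⟨q, ?_⟩
    have he : dy (k + q) = dy k * (8⁻¹:ℝ)^q := by
      unfold dy
      rw [zpow_add₀ (by norm_num : ((8:ℝ)⁻¹) ≠ 0), zpow_natCast]
    rw [he]
    rw [lt_div_iff₀ (by positivity : (0:ℝ) < 2 * dy k)] at hq
    calc 2 * (dy k * 8⁻¹ ^ q) = 8⁻¹ ^ q * (2 * dy k) := by ring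
      _ < ε := hq
  have hinf : (f ⁻¹' {zs} : Set ℕ).Infinite := Set.infinite_coe_iff.1 hzs
  obtain ⟨m, hm1, hm2⟩ := hinf.exists_gt q
  have hanc : G.anc k (k + m) (y m) = (zs : X) := congrArg Subtype.val hm1
  refine ⟨y m, ⟨k + m, by omega, hy1 m, hanc⟩, ?_⟩
  have h5 : dy (k + m) ≤ dy (k + q) := dy_antitone (by omega)
  have h6 := hy2 m
  linarith

lemma Qc_far {k : ℤ} {z w : X} (hz : z ∈ G.N k) (hne : w ≠ z) :
    ∀ y ∈ G.Qc k w, 3/14 * dy k ≤ dist y z := by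
  intro y hy
  have hcl : G.T k w ⊆ {p : X | 3/14 * dy k ≤ dist p z} := by
    rintro p ⟨l, hkl, hpl, hanc⟩
    exact anc_far G hkl hpl hz (by rw [hanc]; exact hne)
  have hclosed : IsClosed {p : X | 3/14 * dy k ≤ dist p z} :=
    isClosed_le continuous_const (continuous_id.dist continuous_const)
  exact closure_minimal hcl hclosed hy

lemma ball_subset_Qo {k : ℤ} {z : X} (hz : z ∈ G.N k) :
    Metric.ball z (1/7 * dy k) ⊆ G.Qo k z := by
  intro y hy
  simp only [Qo, Set.mem_compl_iff, Set.mem_iUnion, not_exists]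
  intro w hyw
  have h1 := Qc_far G hz w.2 y hyw
  have h2 : dist y z < 1/7 * dy k := Metric.mem_ball.1 hy
  have := dy_pos k
  linarith

lemma Qo_nonempty {k : ℤ} {z : X} (hz : z ∈ G.N k) : (G.Qo k z).Nonempty :=
  ⟨z, ball_subset_Qo G hz (Metric.mem_ball_self (by have := dy_pos k; linarith))⟩

lemma not_mem_Qc_of_mem_Qo {k : ℤ} {z w : X} (hw : w ∈ G.N k) (hne : w ≠ z) {x : X}
    (hx : x ∈ G.Qo k z) : x ∉ G.Qc k w := by
  simp only [Qo, Set.mem_compl_iff, Set.mem_iUnion, not_exists] at hx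
  exact hx ⟨⟨w, hw⟩, hne⟩

lemma Qo_subset_Qc {k : ℤ} {z : X} (hz : z ∈ G.N k) : G.Qo k z ⊆ G.Qc k z := by
  intro x hx
  obtain ⟨u, hu, hxu⟩ := cover G k x
  by_cases he : u = z
  · rwa [he] at hxu
  · exact absurd hxu (not_mem_Qc_of_mem_Qo G hu he hx)

lemma Qo_disjoint {k : ℤ} {z w : X} (hz : z ∈ G.N k) (hne : z ≠ w) :
    Disjoint (G.Qo k z) (G.Qo k w) := by
  rw [Set.disjoint_left]
  intro x hxz hxw
  exact not_mem_Qc_of_mem_Qo G hz hne hxw (Qo_subset_Qc G hz hxz)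

lemma Qc_decomp {k l : ℤ} (h : k ≤ l) (z : X) :
    G.Qc k z ⊆ ⋃ w : {w : ↥(G.N l) // G.anc k l (w : X) = z}, G.Qc l ((w : ↥(G.N l)) : X) := by
  have hlf : LocallyFinite
      (fun w : {w : ↥(G.N l) // G.anc k l (w : X) = z} => G.T l ((w : ↥(G.N l)) : X)) :=
    ((locfin G l).comp_injective Subtype.val_injective).subset (fun _ => subset_closure)
  calc G.Qc k z = closure (G.T k z) := rfl
    _ ⊆ closure (⋃ w : {w : ↥(G.N l) // G.anc k l (w : X) = z}, G.T l ((w : ↥(G.N l)) : X)) :=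
        closure_mono (T_decomp G h z)
    _ = ⋃ w : {w : ↥(G.N l) // G.anc k l (w : X) = z}, G.Qc l ((w : ↥(G.N l)) : X) :=
        hlf.closure_iUnion

lemma Qo_nested {k l : ℤ} (h : k ≤ l) {z w : X} (hz : z ∈ G.N k) (hw : w ∈ G.N l)
    (hanc : G.anc k l w = z) : G.Qo l w ⊆ G.Qo k z := by
  intro x hx
  simp only [Qo, Set.mem_compl_iff, Set.mem_iUnion, not_exists] at hx ⊢
  rintro ⟨⟨z', hz'⟩, hz'ne⟩ hxz'
  obtain ⟨⟨⟨w', hw'⟩, hw'anc⟩, hxw'⟩ := Set.mem_iUnion.1 (Qc_decomp G h z' hxz')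
  refine hx ⟨⟨w', hw'⟩, ?_⟩ hxw'
  intro hww'
  apply hz'ne
  simp only at hww' hw'anc
  rw [hww', hanc] at hw'anc
  exact hw'anc.symm

lemma Qo_or {k l : ℤ} (h : k ≤ l) {z w : X} (hz : z ∈ G.N k) (hw : w ∈ G.N l) :
    G.Qo l w ⊆ G.Qo k z ∨ Disjoint (G.Qo l w) (G.Qo k z) := by
  by_cases hanc : G.anc k l w = z
  · exact Or.inl (Qo_nested G h hz hw hanc)
  · right
    have h1 : G.Qo l w ⊆ G.Qo k (G.anc k l w) := Qo_nested G h (anc_mem G h hw) hw rfl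
    exact ((Qo_disjoint G (anc_mem G h hw) hanc).mono_left h1)

end CS
end Christ
namespace Christ

lemma dy_add_nat (k : ℤ) (m : ℕ) : dy (k + m) = dy k * (8⁻¹:ℝ)^m := by
  unfold dy
  rw [zpow_add₀ (by norm_num : ((8:ℝ)⁻¹) ≠ 0), zpow_natCast]

namespace CS

variable {X : Type*} [MetricSpace X] (G : CS X)

lemma countable_N (k : ℤ) : (G.N k).Countable := by
  rcases isEmpty_or_nonempty X with hE | hN
  · rw [Set.eq_empty_of_isEmpty (G.N k)]
    exact Set.countable_empty
  · obtain ⟨x₀⟩ := hN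
    have he : G.N k = ⋃ m : ℕ, G.N k ∩ Metric.ball x₀ m := by
      ext y
      constructor
      · intro hy
        refine Set.mem_iUnion.2 ⟨⌊dist y x₀⌋₊ + 1, hy, Metric.mem_ball.2 ?_⟩
        push_cast
        exact Nat.lt_floor_add_one _
      · rintro ⟨s, ⟨m, rfl⟩, hy⟩
        exact hy.1
    rw [he]
    exact Set.countable_iUnion fun m => (G.fin k x₀ m).countable

lemma secondCountable (G : CS X) : SecondCountableTopology X := by
  have hsep : TopologicalSpace.SeparableSpace X := by
    rcases isEmpty_or_nonempty X with hE | hN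
    · exact ⟨⟨∅, Set.countable_empty, by
        rw [dense_iff_closure_eq, closure_empty, Set.eq_empty_of_isEmpty (Set.univ : Set X)]⟩⟩
    · refine ⟨⟨⋃ m : ℕ, G.N (m : ℤ), Set.countable_iUnion (fun m => countable_N G m), ?_⟩⟩
      rw [Metric.dense_iff]
      intro x r hr
      obtain ⟨q, hq⟩ := exists_pow_lt_of_lt_one (show (0:ℝ) < r / 2 by positivity)
        (by norm_num : (8:ℝ)⁻¹ < 1)
      obtain ⟨y, hy, hd⟩ := G.dens (q : ℤ) x
      have hdyq : dy ((q:ℕ) : ℤ) = (8⁻¹:ℝ)^q := by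
        have := dy_add_nat 0 q
        rw [zero_add] at this
        rw [this]
        unfold dy
        norm_num
      refine ⟨y, Metric.mem_ball.2 ?_, Set.mem_iUnion.2 ⟨q, hy⟩⟩
      rw [dist_comm]
      rw [hdyq] at hd
      linarith
  exact UniformSpace.secondCountable_of_separable X

/-- The union of pairwise intersections of distinct closed cubes at level `k`. -/
def bdry (k : ℤ) : Set X :=
  ⋃ (z : ↥(G.N k)) (w : ↥(G.N k)) (_ : (z : X) ≠ (w : X)), G.Qc k (z : X) ∩ G.Qc k (w : X)

variable [MeasurableSpace X] [BorelSpace X]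

lemma measurableSet_bdry (k : ℤ) : MeasurableSet (G.bdry k) := by
  haveI : Countable ↥(G.N k) := (countable_N G k).to_subtype
  exact MeasurableSet.iUnion fun z => MeasurableSet.iUnion fun w => MeasurableSet.iUnion fun _ =>
    (isClosed_closure.measurableSet).inter isClosed_closure.measurableSet

lemma bdry_avoid (k l : ℤ) (h : k ≤ l) (x : X) :
    ∃ y ∈ G.N l, dist x y < 2 * dy l ∧ Metric.ball y (1/7 * dy l) ∩ G.bdry k = ∅ := by
  obtain ⟨y, hy, hd⟩ := G.dens l x
  refine ⟨y, hy, hd, ?_⟩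
  rw [Set.eq_empty_iff_forall_notMem]
  rintro t ⟨htb, htB⟩
  have key : ∀ v ∈ G.N k, t ∈ G.Qc k v → v = G.anc k l y := by
    intro v hv htv
    obtain ⟨⟨⟨w', hw'⟩, hanc⟩, htw'⟩ := Set.mem_iUnion.1 (Qc_decomp G h v htv)
    by_cases hwy : w' = y
    · rw [← hanc]
      simp only
      rw [hwy]
    · exfalso
      have h1 := Qc_far G hy hwy t htw'
      have h2 : dist t y < 1/7 * dy l := Metric.mem_ball.1 htb
      have := dy_pos l
      linarith
  simp only [bdry, Set.mem_iUnion] at htB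
  obtain ⟨z, w, hzw, htz, htw⟩ := htB
  exact hzw ((key z z.2 htz).trans (key w w.2 htw).symm)

open MeasureTheory in
lemma bdry_null (μ : Measure X) (C₁ n : ℝ) (hC₁ : 1 ≤ C₁)
    (hballs : RDHardy.BallsFinitePos μ) (hdoub : RDHardy.Doubling μ C₁ n) (k : ℤ) :
    μ (G.bdry k) = 0 := by
  haveI : SecondCountableTopology X := secondCountable G
  haveI : IsLocallyFiniteMeasure μ :=
    ⟨fun x => ⟨Metric.ball x 1, Metric.ball_mem_nhds x one_pos, (hballs x 1 one_pos).2⟩⟩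
  haveI : IsUnifLocDoublingMeasure μ := by
    refine ⟨⟨(C₁ * 3 ^ n).toNNReal, ?_⟩⟩
    filter_upwards [self_mem_nhdsWithin] with ε (hε : ε ∈ Set.Ioi (0:ℝ))
    intro x
    simp only [Set.mem_Ioi] at hε
    have h1 : Metric.closedBall x (2*ε) ⊆ Metric.ball x (3*ε) := by
      intro y hy
      have := Metric.mem_closedBall.1 hy
      exact Metric.mem_ball.2 (by linarith)
    have h2 := hdoub x 3 ε (by norm_num) hε
    calc μ (Metric.closedBall x (2*ε)) ≤ μ (Metric.ball x (3*ε)) := measure_mono h1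
      _ ≤ ENNReal.ofReal (C₁ * 3 ^ n) * μ (Metric.ball x ε) := h2
      _ ≤ ((C₁ * 3 ^ n).toNNReal : ℝ≥0∞) * μ (Metric.closedBall x ε) := by
          rw [show ENNReal.ofReal (C₁ * 3 ^ n) = ((C₁ * 3 ^ n).toNNReal : ℝ≥0∞) from rfl]
          exact mul_le_mul_right (measure_mono Metric.ball_subset_closedBall) _
  by_contra hne
  have hFm : MeasurableSet (G.bdry k) := measurableSet_bdry G k
  have hres : μ.restrict (G.bdry k) ≠ 0 := by
    intro h0
    apply hne
    have := congrArg (fun ν : Measure X => ν Set.univ) h0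
    simpa [Measure.restrict_apply_univ] using this
  haveI : (MeasureTheory.ae (μ.restrict (G.bdry k))).NeBot := ae_neBot.2 hres
  have hae := IsUnifLocDoublingMeasure.ae_tendsto_measure_inter_div μ (G.bdry k) 28
  have hmem := ae_restrict_mem (μ := μ) hFm
  obtain ⟨x, hxF, hx⟩ := (hmem.and hae).exists
  have hw : ∀ m : ℕ, ∃ y ∈ G.N (k + m), dist x y < 2 * dy (k + m) ∧
      Metric.ball y (1/7 * dy (k + m)) ∩ G.bdry k = ∅ :=
    fun m => bdry_avoid G k (k + m) (by omega) x
  choose y hy1 hy2 hy3 using hw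
  set δf : ℕ → ℝ := fun m => 1/14 * dy (k + m) with hδf
  have hδ0 : Filter.Tendsto δf Filter.atTop (nhdsWithin 0 (Set.Ioi 0)) := by
    rw [tendsto_nhdsWithin_iff]
    constructor
    · have hg : Filter.Tendsto (fun m : ℕ => (1/14 * dy k) * (8⁻¹:ℝ)^m) Filter.atTop (nhds 0) := by
        have h0 := tendsto_pow_atTop_nhds_zero_of_lt_one (by norm_num : (0:ℝ) ≤ 8⁻¹)
          (by norm_num : (8:ℝ)⁻¹ < 1)
        simpa using h0.const_mul (1/14 * dy k)
      refine hg.congr ?_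
      intro m
      rw [hδf]
      simp only
      rw [dy_add_nat]
      ring
    · exact Filter.Eventually.of_forall fun m => by
        have := dy_pos (k + m)
        simp only [hδf, Set.mem_Ioi]
        positivity
  have hmemB : ∀ᶠ m in Filter.atTop, x ∈ Metric.closedBall (y m) (28 * δf m) := by
    refine Filter.Eventually.of_forall fun m => Metric.mem_closedBall.2 ?_
    have h2 := hy2 m
    have he : 28 * δf m = 2 * dy (k + m) := by simp only [hδf]; ring
    rw [he]
    exact h2.le
  have htend := hx y δf hδ0 hmemB
  have hzero : ∀ m : ℕ, μ (G.bdry k ∩ Metric.closedBall (y m) (δf m)) = 0 := by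
    intro m
    refine measure_mono_null ?_ (measure_empty (μ := μ))
    rintro t ⟨htF, htc⟩
    rw [← hy3 m]
    refine ⟨Metric.mem_ball.2 (lt_of_le_of_lt (Metric.mem_closedBall.1 htc) ?_), htF⟩
    have := dy_pos (k + m)
    simp only [hδf]
    linarith
  have hconst : Filter.Tendsto (fun _ : ℕ => (0:ℝ≥0∞)) Filter.atTop (nhds 1) := by
    refine htend.congr fun m => ?_
    rw [hzero m, ENNReal.zero_div]
  have h01 := tendsto_nhds_unique hconst tendsto_const_nhds
  simp at h01

open MeasureTheory in
lemma Qo_cover_ae (μ : Measure X) (C₁ n : ℝ) (hC₁ : 1 ≤ C₁)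
    (hballs : RDHardy.BallsFinitePos μ) (hdoub : RDHardy.Doubling μ C₁ n) (k : ℤ) :
    μ (Set.univ \ ⋃ z : ↥(G.N k), G.Qo k (z : X)) = 0 := by
  refine measure_mono_null ?_ (bdry_null G μ C₁ n hC₁ hballs hdoub k)
  rintro x ⟨-, hx⟩
  obtain ⟨u, hu, hxu⟩ := cover G k x
  have hnot : x ∉ G.Qo k u := fun h => hx (Set.mem_iUnion.2 ⟨⟨u, hu⟩, h⟩)
  simp only [Qo, Set.mem_compl_iff, not_not] at hnot
  obtain ⟨⟨⟨w, hw⟩, hwne⟩, hxw⟩ := Set.mem_iUnion.1 hnot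
  simp only [bdry, Set.mem_iUnion]
  exact ⟨⟨u, hu⟩, ⟨w, hw⟩, fun hc => hwne (by simpa using hc.symm), hxu, hxw⟩

end CS
end Christ
/-- **Lemma 5.1** (Christ): existence of a dyadic cube structure on a space of
homogeneous type. -/
theorem christ_dyadic_cubes
    {X : Type*} [MetricSpace X] [MeasurableSpace X] [BorelSpace X]
    (μ : Measure X) (C₁ n : ℝ) (hC₁ : 1 ≤ C₁) (hn : 0 < n)
    (hballs : BallsFinitePos μ) (hdoub : Doubling μ C₁ n) :
    ∃ (ι : ℤ → Type) (Q : ∀ k : ℤ, ι k → Set X) (δ C₇ C₈ : ℝ),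
      0 < δ ∧ δ < 1 ∧ 0 < C₇ ∧ 0 < C₈ ∧
      (∀ (k : ℤ) (α : ι k), IsOpen (Q k α)) ∧
      (∀ k : ℤ, μ (univ \ ⋃ α : ι k, Q k α) = 0) ∧
      (∀ k : ℤ, Pairwise (Function.onFun Disjoint (Q k))) ∧
      (∀ k l : ℤ, k ≤ l → ∀ (α : ι k) (β : ι l), Q l β ⊆ Q k α ∨ Disjoint (Q l β) (Q k α)) ∧
      (∀ k l : ℤ, l < k → ∀ α : ι k, ∃! β : ι l, Q k α ⊆ Q l β) ∧
      (∀ (k : ℤ) (α : ι k), Bornology.IsBounded (Q k α) ∧ Metric.diam (Q k α) ≤ C₇ * δ ^ k) ∧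
      (∀ (k : ℤ) (α : ι k), ∃ z : X, ball z (C₈ * δ ^ k) ⊆ Q k α) := by
  classical
  rcases isEmpty_or_nonempty X with hE | hN
  · have huniv : (Set.univ : Set X) = ∅ := Set.univ_eq_empty_iff.2 hE
    refine ⟨fun _ => Empty, fun _ e => e.elim, 1/2, 1, 1, by norm_num, by norm_num, by norm_num,
      by norm_num, fun k α => α.elim, ?_, ?_, fun k l _ α => α.elim, fun k l _ α => α.elim,
      fun k α => α.elim, fun k α => α.elim⟩
    · intro k
      refine measure_mono_null (fun x hx => hx.1) ?_
      rw [huniv]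
      exact measure_empty
    · intro k a
      exact a.elim
  · obtain ⟨G⟩ := Christ.exists_CS μ C₁ n hC₁ hballs hdoub
    have hdy : ∀ k : ℤ, Christ.dy k = (8⁻¹:ℝ) ^ k := fun _ => rfl
    have hcnt : ∀ k : ℤ, Countable ↥(G.N k) := fun k => (Christ.CS.countable_N G k).to_subtype
    have henc : ∀ k : ℤ, ∃ f : ↥(G.N k) → ℕ, Function.Injective f :=
      fun k => (countable_iff_exists_injective _).1 (hcnt k)
    choose f hf using henc
    let E : ∀ k : ℤ, ↥(G.N k) ≃ ↥(Set.range (f k)) := fun k => Equiv.ofInjective (f k) (hf k)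
    refine ⟨fun k => ↥(Set.range (f k)),
      fun k i => G.Qo k (((E k).symm i : ↥(G.N k)) : X), 8⁻¹, 6, 1/7,
      by norm_num, by norm_num, by norm_num, by norm_num, ?_, ?_, ?_, ?_, ?_, ?_, ?_⟩
    · intro k i
      exact Christ.CS.isOpen_Qo G k _
    · intro k
      have he : (⋃ i : ↥(Set.range (f k)), G.Qo k (((E k).symm i : ↥(G.N k)) : X)) =
          ⋃ z : ↥(G.N k), G.Qo k (z : X) := by
        ext x
        simp only [Set.mem_iUnion]
        constructor
        · rintro ⟨i, hi⟩
          exact ⟨(E k).symm i, hi⟩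
        · rintro ⟨z, hz⟩
          exact ⟨E k z, by rw [Equiv.symm_apply_apply]; exact hz⟩
      rw [he]
      exact Christ.CS.Qo_cover_ae G μ C₁ n hC₁ hballs hdoub k
    · intro k i j hij
      refine Christ.CS.Qo_disjoint G ((E k).symm i).2 ?_
      intro hc
      exact hij ((E k).symm.injective (Subtype.ext hc))
    · intro k l hkl α β
      exact Christ.CS.Qo_or G hkl ((E k).symm α).2 ((E l).symm β).2
    · intro k l hlk α
      set z : X := (((E k).symm α : ↥(G.N k)) : X) with hz
      have hzmem : z ∈ G.N k := ((E k).symm α).2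
      have hamem : G.anc l k z ∈ G.N l := Christ.CS.anc_mem G hlk.le hzmem
      refine ⟨E l ⟨G.anc l k z, hamem⟩, ?_, ?_⟩
      · have hsub : G.Qo k z ⊆ G.Qo l (G.anc l k z) :=
          Christ.CS.Qo_nested G hlk.le hamem hzmem rfl
        simpa only [Equiv.symm_apply_apply] using hsub
      · intro β' hβ'
        have hsub0 : G.Qo k z ⊆ G.Qo l (G.anc l k z) :=
          Christ.CS.Qo_nested G hlk.le hamem hzmem rfl
        have hne : (G.Qo k z).Nonempty := Christ.CS.Qo_nonempty G hzmem
        have hcc : (((E l).symm β' : ↥(G.N l)) : X) = G.anc l k z := by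
          by_contra hcc
          have hd := Christ.CS.Qo_disjoint G ((E l).symm β').2 hcc
          obtain ⟨p, hp⟩ := hne
          exact (Set.disjoint_left.1 hd) (hβ' hp) (hsub0 hp)
        apply (E l).symm.injective
        rw [Equiv.symm_apply_apply]
        exact Subtype.ext hcc
    · intro k α
      have h1 : G.Qo k (((E k).symm α : ↥(G.N k)) : X) ⊆
          Metric.closedBall (((E k).symm α : ↥(G.N k)) : X) (3 * Christ.dy k) :=
        (Christ.CS.Qo_subset_Qc G ((E k).symm α).2).trans (Christ.CS.Qc_subset G k _)
      have h2 := Metric.diam_mono h1 Metric.isBounded_closedBall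
      have h3 : Metric.diam (Metric.closedBall (((E k).symm α : ↥(G.N k)) : X)
          (3 * Christ.dy k)) ≤ 2 * (3 * Christ.dy k) := Metric.diam_closedBall
        (by have := Christ.dy_pos k; linarith)
      rw [hdy k] at h2 h3
      refine ⟨Metric.isBounded_closedBall.subset h1, ?_⟩
      calc Metric.diam (G.Qo k (((E k).symm α : ↥(G.N k)) : X)) ≤ 2 * (3 * (8⁻¹:ℝ)^k) :=
            le_trans h2 h3
        _ = 6 * (8⁻¹:ℝ)^k := by ring
    · intro k α
      refine ⟨(((E k).symm α : ↥(G.N k)) : X), ?_⟩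
      have := Christ.CS.ball_subset_Qo G ((E k).symm α).2
      rwa [hdy k] at this

end RDHardy
end

section
/- Test-norm regularity of an AOTI kernel in its first variable (key estimate for J₁ in the proof of Theorem 3.2(ii)). Let ε₁∈(0,1], ε₂,ε₃>0, and let (S_k)_{k∈ℤ} be an (ε₁,ε₂,ε₃)-approximation of the identity on X. Let ε∈(0,min(ε₁,ε₂,ε₃)) and β,γ∈(0,ε). Then there exists a constant C>0, independent of ℓ, such that for all ℓ∈ℤ and all y,y',z∈X with d(y,y') ≤ 2^{-ℓ} and d(z,y) ≤ 2^{-ℓ}, the function u ↦ S_ℓ(y,u)−S_ℓ(y',u) satisfies ‖S_ℓ(y,·)−S_ℓ(y',·)‖_{G(z,2^{-ℓ},β,γ)} ≤ C·(2^{ℓ}d(y,y'))^{ε₁}. -/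
open MeasureTheory Metric Set Filter
open scoped ENNReal NNReal Topology

namespace RDHardy

variable {X : Type*} [MetricSpace X] [MeasurableSpace X] [BorelSpace X]

section Helpers

variable {μ : Measure X} {C₁ n : ℝ}

lemma vol_nonneg (μ : Measure X) (x : X) (r : ℝ) : 0 ≤ vol μ x r := ENNReal.toReal_nonneg

lemma vol_pos (hb : BallsFinitePos μ) (x : X) {r : ℝ} (hr : 0 < r) : 0 < vol μ x r :=
  ENNReal.toReal_pos (hb x r hr).1.ne' (hb x r hr).2.ne

lemma vol_mono (hb : BallsFinitePos μ) (x : X) {r r' : ℝ} (h : r ≤ r') (hr' : 0 < r') :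
    vol μ x r ≤ vol μ x r' :=
  ENNReal.toReal_mono (hb x r' hr').2.ne (measure_mono (ball_subset_ball h))

lemma vol_center (hb : BallsFinitePos μ) {x y : X} {r r' : ℝ} (hr : 0 < r)
    (h : r + dist x y ≤ r') : vol μ x r ≤ vol μ y r' := by
  have hr' : 0 < r' :=
    lt_of_lt_of_le hr (le_trans (le_add_of_nonneg_right dist_nonneg) h)
  exact ENNReal.toReal_mono (hb y r' hr').2.ne (measure_mono (ball_subset_ball' h))

lemma vol_doub (hb : BallsFinitePos μ) (hd : Doubling μ C₁ n) (hC₁ : 1 ≤ C₁) (hn : 0 < n)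
    (x : X) {l r : ℝ} (hl : 1 ≤ l) (hr : 0 < r) :
    vol μ x (l * r) ≤ C₁ * l ^ n * vol μ x r := by
  have h := hd x l r hl hr
  have hcl : (0:ℝ) ≤ C₁ * l ^ n :=
    mul_nonneg (by linarith) (Real.rpow_nonneg (by linarith) n)
  calc vol μ x (l*r) ≤ (ENNReal.ofReal (C₁ * l ^ n) * μ (ball x r)).toReal :=
        ENNReal.toReal_mono (ENNReal.mul_ne_top ENNReal.ofReal_ne_top (hb x r hr).2.ne) h
    _ = C₁ * l ^ n * vol μ x r := by
        rw [ENNReal.toReal_mul, ENNReal.toReal_ofReal hcl]; rfl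

lemma sz_nonneg (μ : Measure X) (x y : X) {r : ℝ} (hr : 0 ≤ r) (γ : ℝ) :
    0 ≤ sz μ x y r γ := by
  unfold sz
  have h1 : (0:ℝ) ≤ r / (r + dist x y) :=
    div_nonneg hr (by linarith [dist_nonneg (x := x) (y := y)])
  exact mul_nonneg (inv_nonneg.2 (add_nonneg (vol_nonneg _ _ _) (vol_nonneg _ _ _)))
    (Real.rpow_nonneg h1 γ)

lemma rpow_lb {x c : ℝ} (hc : 0 < c) (hc1 : c ≤ 1) (hx : c ≤ x) {p : ℝ} (hp : 0 < p)
    (hp1 : p ≤ 1) : c ≤ x ^ p := by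
  rcases le_or_gt 1 x with h | h
  · have : (1:ℝ) ≤ x ^ p := Real.one_le_rpow h hp.le
    linarith
  · have h2 : x ^ (1:ℝ) ≤ x ^ p :=
      Real.rpow_le_rpow_of_exponent_ge (lt_of_lt_of_le hc hx) h.le hp1
    rw [Real.rpow_one] at h2; linarith

lemma mul_le_mul₃ {a a' b b' c c' : ℝ} (ha : a ≤ a') (hb : b ≤ b') (hc : c ≤ c')
    (hb0 : 0 ≤ b) (hc0 : 0 ≤ c) (ha'0 : 0 ≤ a') (hb'0 : 0 ≤ b') : a*b*c ≤ a'*b'*c' :=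
  mul_le_mul (mul_le_mul ha hb hb0 ha'0) hc hc0 (mul_nonneg ha'0 hb'0)

/-- Central comparison: moving the center from `y` to `z` at distance `≤ a t`. -/
lemma sz_le (hb : BallsFinitePos μ) (hd : Doubling μ C₁ n) (hC₁ : 1 ≤ C₁) (hn : 0 < n)
    {t a γ ε' : ℝ} (ht : 0 < t) (ha : 1 ≤ a) (hγ : 0 < γ) (hγε : γ ≤ ε')
    (y z u : X) (hzy : dist z y ≤ a * t) :
    sz μ y u t ε' ≤ (1+a) ^ γ * (2 * (C₁ * (1+2*a) ^ n)) * sz μ z u t γ := by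
  unfold sz
  set dy := dist y u with hdy
  set dz := dist z u with hdz
  have hdy0 : 0 ≤ dy := dist_nonneg
  have hdz0 : 0 ≤ dz := dist_nonneg
  have hty : 0 < t + dy := by linarith
  have htz : 0 < t + dz := by linarith
  have hC₁0 : (0:ℝ) < C₁ := by linarith
  have hPp : (0:ℝ) < C₁ * (1+2*a) ^ n :=
    mul_pos hC₁0 (Real.rpow_pos_of_pos (by linarith) n)
  set P := C₁ * (1+2*a) ^ n with hPdef
  have hdzy : dz ≤ a * t + dy := by
    have := dist_triangle z y u
    rw [← hdy, ← hdz] at this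
    linarith [this, hzy]
  -- exponent comparisons
  have hbase : 0 < t / (t + dy) := div_pos ht hty
  have hbase1 : t / (t + dy) ≤ 1 := by rw [div_le_one hty]; linarith
  have hA : (t/(t+dy)) ^ ε' ≤ (t/(t+dy)) ^ γ :=
    Real.rpow_le_rpow_of_exponent_ge hbase hbase1 hγε
  have hB0 : t/(t+dy) ≤ (1+a) * (t/(t+dz)) := by
    rw [← mul_div_assoc, div_le_div_iff₀ hty htz]
    nlinarith [mul_nonneg (mul_nonneg (by linarith : (0:ℝ) ≤ a) ht.le) hdy0,
      mul_le_mul_of_nonneg_left hdzy ht.le]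
  have hB : (t/(t+dy)) ^ γ ≤ (1+a)^γ * (t/(t+dz))^γ := by
    calc (t/(t+dy))^γ ≤ ((1+a) * (t/(t+dz)))^γ :=
          Real.rpow_le_rpow hbase.le hB0 hγ.le
      _ = (1+a)^γ * (t/(t+dz))^γ :=
          Real.mul_rpow (by linarith) (div_nonneg ht.le htz.le)
  -- volume comparisons
  have hVy : 0 < vol μ y t + vol μ y dy :=
    add_pos_of_pos_of_nonneg (vol_pos hb y ht) (vol_nonneg _ _ _)
  have hVz : 0 < vol μ z t + vol μ z dz :=
    add_pos_of_pos_of_nonneg (vol_pos hb z ht) (vol_nonneg _ _ _)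
  have hc1 : vol μ z t ≤ P * vol μ y t := by
    have h1 : vol μ z t ≤ vol μ y ((1+a) * t) := by
      apply vol_center hb ht
      nlinarith
    have h2 : vol μ y ((1+a)*t) ≤ C₁*(1+a)^n * vol μ y t :=
      vol_doub hb hd hC₁ hn y (by linarith) ht
    have h3 : C₁*(1+a)^n ≤ P := by
      rw [hPdef]
      exact mul_le_mul_of_nonneg_left
        (Real.rpow_le_rpow (by linarith) (by linarith) hn.le) hC₁0.le
    calc vol μ z t ≤ C₁*(1+a)^n * vol μ y t := h1.trans h2
      _ ≤ P * vol μ y t := mul_le_mul_of_nonneg_right h3 (vol_nonneg _ _ _)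
  have hc2 : vol μ z dz ≤ P * (vol μ y t + vol μ y dy) := by
    rcases eq_or_lt_of_le hdz0 with h0 | h0
    · have hz0 : vol μ z dz = 0 := by
        unfold vol
        rw [← h0, ball_zero, measure_empty, ENNReal.toReal_zero]
      rw [hz0]
      exact mul_nonneg hPp.le hVy.le
    · set m := max t dy with hm
      have hm0 : 0 < m := lt_of_lt_of_le ht (le_max_left _ _)
      have h1 : vol μ z dz ≤ vol μ y (dy + 2*a*t) := by
        apply vol_center hb h0
        nlinarith [hdzy]
      have h2 : vol μ y (dy + 2*a*t) ≤ vol μ y ((1+2*a)*m) := by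
        apply vol_mono hb y _ (by positivity)
        have h5 : t ≤ m := le_max_left _ _
        have h6 : dy ≤ m := le_max_right _ _
        nlinarith
      have h3 : vol μ y ((1+2*a)*m) ≤ P * vol μ y m :=
        vol_doub hb hd hC₁ hn y (by linarith) hm0
      have h4 : vol μ y m ≤ vol μ y t + vol μ y dy := by
        rcases max_cases t dy with ⟨he, _⟩ | ⟨he, _⟩ <;> rw [hm, he]
        · linarith [vol_nonneg μ y dy]
        · linarith [vol_nonneg μ y t]
      calc vol μ z dz ≤ P * vol μ y m := (h1.trans h2).trans h3
        _ ≤ P * (vol μ y t + vol μ y dy) := mul_le_mul_of_nonneg_left h4 hPp.le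
  have hC : vol μ z t + vol μ z dz ≤ 2 * P * (vol μ y t + vol μ y dy) := by
    have h6 : P * vol μ y t ≤ P * (vol μ y t + vol μ y dy) :=
      mul_le_mul_of_nonneg_left (le_add_of_nonneg_right (vol_nonneg _ _ _)) hPp.le
    linarith
  have hD : (vol μ y t + vol μ y dy)⁻¹ ≤ 2 * P * (vol μ z t + vol μ z dz)⁻¹ := by
    rw [inv_eq_one_div, inv_eq_one_div, mul_one_div, div_le_div_iff₀ hVy hVz]
    linarith
  calc (vol μ y t + vol μ y dy)⁻¹ * (t/(t+dy))^ε'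
      ≤ (vol μ y t + vol μ y dy)⁻¹ * (t/(t+dy))^γ :=
        mul_le_mul_of_nonneg_left hA (inv_nonneg.2 hVy.le)
    _ ≤ (vol μ y t + vol μ y dy)⁻¹ * ((1+a)^γ * (t/(t+dz))^γ) :=
        mul_le_mul_of_nonneg_left hB (inv_nonneg.2 hVy.le)
    _ ≤ (2 * P * (vol μ z t + vol μ z dz)⁻¹) * ((1+a)^γ * (t/(t+dz))^γ) :=
        mul_le_mul_of_nonneg_right hD
          (mul_nonneg (Real.rpow_nonneg (by linarith) γ)
            (Real.rpow_nonneg (div_nonneg ht.le htz.le) γ))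
    _ = (1+a)^γ * (2 * P) * ((vol μ z t + vol μ z dz)⁻¹ * (t/(t+dz))^γ) := by ring

/-- Comparison when moving the second argument: if `t + d(z,u) ≤ b (t + d(z,u'))`. -/
lemma sz_shift (hb : BallsFinitePos μ) (hd : Doubling μ C₁ n) (hC₁ : 1 ≤ C₁) (hn : 0 < n)
    {t b γ : ℝ} (ht : 0 < t) (hbb : 1 ≤ b) (hγ : 0 < γ)
    (z u u' : X) (h : t + dist z u ≤ b * (t + dist z u')) :
    sz μ z u' t γ ≤ b ^ γ * (1 + C₁ * (2*b) ^ n) * sz μ z u t γ := by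
  unfold sz
  set du := dist z u with hdu
  set du' := dist z u' with hdu'
  have hdu0 : 0 ≤ du := dist_nonneg
  have hdu'0 : 0 ≤ du' := dist_nonneg
  have htu : 0 < t + du := by linarith
  have htu' : 0 < t + du' := by linarith
  have hC₁0 : (0:ℝ) < C₁ := by linarith
  have hPp : (0:ℝ) < C₁ * (2*b) ^ n :=
    mul_pos hC₁0 (Real.rpow_pos_of_pos (by linarith) n)
  set P := C₁ * (2*b) ^ n with hPdef
  have hB0 : t/(t+du') ≤ b * (t/(t+du)) := by
    rw [← mul_div_assoc, div_le_div_iff₀ htu' htu]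
    nlinarith [mul_le_mul_of_nonneg_left h ht.le]
  have hB : (t/(t+du'))^γ ≤ b^γ * (t/(t+du))^γ := by
    calc (t/(t+du'))^γ ≤ (b * (t/(t+du)))^γ :=
          Real.rpow_le_rpow (div_nonneg ht.le htu'.le) hB0 hγ.le
      _ = b^γ * (t/(t+du))^γ :=
          Real.mul_rpow (by linarith) (div_nonneg ht.le htu.le)
  have hVu : 0 < vol μ z t + vol μ z du :=
    add_pos_of_pos_of_nonneg (vol_pos hb z ht) (vol_nonneg _ _ _)
  have hVu' : 0 < vol μ z t + vol μ z du' :=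
    add_pos_of_pos_of_nonneg (vol_pos hb z ht) (vol_nonneg _ _ _)
  have hc2 : vol μ z du ≤ P * (vol μ z t + vol μ z du') := by
    rcases eq_or_lt_of_le hdu0 with h0 | h0
    · have hz0 : vol μ z du = 0 := by
        unfold vol
        rw [← h0, ball_zero, measure_empty, ENNReal.toReal_zero]
      rw [hz0]
      exact mul_nonneg hPp.le hVu'.le
    · set m := max t du' with hm
      have hm0 : 0 < m := lt_of_lt_of_le ht (le_max_left _ _)
      have h1 : vol μ z du ≤ vol μ z ((2*b)*m) := by
        apply vol_mono hb z _ (by positivity)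
        have h5 : t ≤ m := le_max_left _ _
        have h6 : du' ≤ m := le_max_right _ _
        nlinarith
      have h3 : vol μ z ((2*b)*m) ≤ P * vol μ z m :=
        vol_doub hb hd hC₁ hn z (by linarith) hm0
      have h4 : vol μ z m ≤ vol μ z t + vol μ z du' := by
        rcases max_cases t du' with ⟨he, _⟩ | ⟨he, _⟩ <;> rw [hm, he]
        · linarith [vol_nonneg μ z du']
        · linarith [vol_nonneg μ z t]
      calc vol μ z du ≤ P * vol μ z m := h1.trans h3
        _ ≤ P * (vol μ z t + vol μ z du') := mul_le_mul_of_nonneg_left h4 hPp.le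
  have hC : vol μ z t + vol μ z du ≤ (1+P) * (vol μ z t + vol μ z du') := by
    have : vol μ z t ≤ vol μ z t + vol μ z du' :=
      le_add_of_nonneg_right (vol_nonneg _ _ _)
    nlinarith
  have hD : (vol μ z t + vol μ z du')⁻¹ ≤ (1+P) * (vol μ z t + vol μ z du)⁻¹ := by
    rw [inv_eq_one_div, inv_eq_one_div, mul_one_div, div_le_div_iff₀ hVu' hVu]
    linarith
  calc (vol μ z t + vol μ z du')⁻¹ * (t/(t+du'))^γ
      ≤ (vol μ z t + vol μ z du')⁻¹ * (b^γ * (t/(t+du))^γ) :=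
        mul_le_mul_of_nonneg_left hB (inv_nonneg.2 hVu'.le)
    _ ≤ ((1+P) * (vol μ z t + vol μ z du)⁻¹) * (b^γ * (t/(t+du))^γ) :=
        mul_le_mul_of_nonneg_right hD
          (mul_nonneg (Real.rpow_nonneg (by linarith) γ)
            (Real.rpow_nonneg (div_nonneg ht.le htu.le) γ))
    _ = b^γ * (1+P) * ((vol μ z t + vol μ z du)⁻¹ * (t/(t+du))^γ) := by ring

end Helpers


/-- Size part of the test-norm estimate. -/
lemma key_size {μ : Measure X} {C₁ n : ℝ} (hC₁ : 1 ≤ C₁) (hn : 0 < n)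
    (hb : BallsFinitePos μ) (hd : Doubling μ C₁ n)
    {ε₁ ε₂ ε₃ C₄ : ℝ} (hε₁ : 0 < ε₁ ∧ ε₁ ≤ 1) (hC₄ : 0 < C₄)
    {S : ℤ → X → X → ℂ} (hS : IsAOTI μ C₄ ε₁ ε₂ ε₃ S)
    {γ : ℝ} (hγ : 0 < γ) (hγ₂ : γ ≤ ε₂) :
    ∃ Cs : ℝ, 0 < Cs ∧ ∀ (ℓ : ℤ) (y y' z u : X),
      dist y y' ≤ sc ℓ → dist z y ≤ sc ℓ →
      ‖S ℓ y u - S ℓ y' u‖ ≤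
        Cs * ((2:ℝ)^ℓ * dist y y')^ε₁ * sz μ z u (sc ℓ) γ := by
  have hC₁0 : (0:ℝ) < C₁ := by linarith
  set A₁ : ℝ := (1+1)^γ * (2*(C₁*(1+2*1)^n)) with hA₁def
  set A₂ : ℝ := (1+2)^γ * (2*(C₁*(1+2*2)^n)) with hA₂def
  have hA₁0 : 0 < A₁ := by
    rw [hA₁def]
    have h1 : (0:ℝ) < (1+1:ℝ)^γ := Real.rpow_pos_of_pos (by norm_num) γ
    have h2 : (0:ℝ) < (1+2*1:ℝ)^n := Real.rpow_pos_of_pos (by norm_num) n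
    positivity
  have hA₂0 : 0 < A₂ := by
    rw [hA₂def]
    have h1 : (0:ℝ) < (1+2:ℝ)^γ := Real.rpow_pos_of_pos (by norm_num) γ
    have h2 : (0:ℝ) < (1+2*2:ℝ)^n := Real.rpow_pos_of_pos (by norm_num) n
    positivity
  clear_value A₁ A₂
  refine ⟨2*C₄*(A₁+A₂), by positivity, ?_⟩
  intro ℓ y y' z u hyy' hzy
  set t := sc ℓ with htdef
  have ht : 0 < t := by rw [htdef]; unfold sc; positivity
  set d := dist y y' with hddef
  clear_value t d
  have hd0 : 0 ≤ d := hddef ▸ dist_nonneg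
  have h2l : (2:ℝ)^ℓ * d = d / t := by
    rw [htdef]; unfold sc; rw [zpow_neg, div_eq_mul_inv, inv_inv, mul_comm]
  rw [h2l]
  have hdyu0 : 0 ≤ dist y u := dist_nonneg
  have htyu : 0 < t + dist y u := by linarith
  have hA₁' : sz μ y u t ε₂ ≤ A₁ * sz μ z u t γ := by
    rw [hA₁def]
    exact sz_le hb hd hC₁ hn ht le_rfl hγ hγ₂ y z u (by rw [one_mul]; exact hzy)
  have hA₂' : sz μ y' u t ε₂ ≤ A₂ * sz μ z u t γ := by
    rw [hA₂def]
    refine sz_le hb hd hC₁ hn ht (by norm_num) hγ hγ₂ y' z u ?_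
    calc dist z y' ≤ dist z y + dist y y' := dist_triangle z y y'
      _ ≤ 2 * t := by rw [← hddef]; linarith
  have hsz0 : 0 ≤ sz μ z u t γ := sz_nonneg μ z u ht.le γ
  have hrp0 : 0 ≤ (d/t)^ε₁ := Real.rpow_nonneg (div_nonneg hd0 ht.le) ε₁
  rcases le_or_gt d ((t + dist y u)/2) with hcase | hcase
  · -- Hölder case
    have h1 := hS.holder_fst ℓ y y' u (by rw [← htdef, ← hddef]; exact hcase)
    rw [← htdef, ← hddef] at h1
    have hfac : (d/(t + dist y u))^ε₁ ≤ (d/t)^ε₁ := by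
      apply Real.rpow_le_rpow (div_nonneg hd0 htyu.le) _ hε₁.1.le
      rw [div_le_div_iff₀ htyu ht]
      nlinarith
    calc ‖S ℓ y u - S ℓ y' u‖
        ≤ C₄ * (d/(t + dist y u))^ε₁ * sz μ y u t ε₂ := h1
      _ ≤ C₄ * (d/t)^ε₁ * (A₁ * sz μ z u t γ) :=
          mul_le_mul₃ le_rfl hfac hA₁'
            (Real.rpow_nonneg (div_nonneg hd0 htyu.le) ε₁)
            (sz_nonneg μ y u ht.le ε₂) hC₄.le hrp0
      _ = (C₄*A₁) * (d/t)^ε₁ * sz μ z u t γ := by ring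
      _ ≤ (2*C₄*(A₁+A₂)) * (d/t)^ε₁ * sz μ z u t γ :=
          mul_le_mul₃ (by nlinarith) le_rfl le_rfl hrp0 hsz0 (by positivity) hrp0
  · -- size case
    have hd2 : t < 2*d := by linarith
    have hlb : (1:ℝ)/2 ≤ (d/t)^ε₁ := by
      apply rpow_lb (by norm_num) (by norm_num) _ hε₁.1 hε₁.2
      rw [le_div_iff₀ ht]; linarith
    have h2 := hS.size ℓ y u
    have h3 := hS.size ℓ y' u
    rw [← htdef] at h2 h3
    have hkey : C₄ * (A₁ + A₂) ≤ 2*C₄*(A₁+A₂) * ((d/t)^ε₁) := by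
      have hP : (0:ℝ) < C₄ * (A₁ + A₂) := mul_pos hC₄ (add_pos hA₁0 hA₂0)
      have h := mul_le_mul_of_nonneg_left hlb hP.le
      nlinarith
    calc ‖S ℓ y u - S ℓ y' u‖
        ≤ ‖S ℓ y u‖ + ‖S ℓ y' u‖ := norm_sub_le _ _
      _ ≤ C₄ * (A₁ * sz μ z u t γ) + C₄ * (A₂ * sz μ z u t γ) := by
          have g1 := mul_le_mul_of_nonneg_left hA₁' hC₄.le
          have g2 := mul_le_mul_of_nonneg_left hA₂' hC₄.le
          linarith
      _ = C₄ * (A₁ + A₂) * sz μ z u t γ := by ring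
      _ ≤ 2*C₄*(A₁+A₂) * ((d/t)^ε₁) * sz μ z u t γ :=
          mul_le_mul_of_nonneg_right hkey hsz0


lemma mul_le_mul₄ {a a' b b' c c' e e' : ℝ} (ha : a ≤ a') (hb : b ≤ b') (hc : c ≤ c')
    (he : e ≤ e') (hb0 : 0 ≤ b) (hc0 : 0 ≤ c) (he0 : 0 ≤ e) (ha'0 : 0 ≤ a')
    (hb'0 : 0 ≤ b') (hc'0 : 0 ≤ c') : a*b*c*e ≤ a'*b'*c'*e' :=
  mul_le_mul (mul_le_mul₃ ha hb hc hb0 hc0 ha'0 hb'0) he he0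
    (mul_nonneg (mul_nonneg ha'0 hb'0) hc'0)

set_option maxHeartbeats 2000000 in
/-- Hölder (regularity) part of the test-norm estimate. -/
lemma key_holder {μ : Measure X} {C₁ n : ℝ} (hC₁ : 1 ≤ C₁) (hn : 0 < n)
    (hb : BallsFinitePos μ) (hd : Doubling μ C₁ n)
    {ε₁ ε₂ ε₃ C₄ : ℝ} (hε₁ : 0 < ε₁ ∧ ε₁ ≤ 1) (hC₄ : 0 < C₄)
    {S : ℤ → X → X → ℂ} (hS : IsAOTI μ C₄ ε₁ ε₂ ε₃ S)
    {β γ : ℝ} (hβ : 0 < β) (hβ₁ : β ≤ ε₁) (hγ : 0 < γ) (hγ₂ : γ ≤ ε₂) (hγ₃ : γ ≤ ε₃) :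
    ∃ Ch : ℝ, 0 < Ch ∧ ∀ (ℓ : ℤ) (y y' z u u' : X),
      dist y y' ≤ sc ℓ → dist z y ≤ sc ℓ → dist u u' ≤ (sc ℓ + dist z u)/2 →
      ‖S ℓ y u - S ℓ y' u - (S ℓ y u' - S ℓ y' u')‖ ≤
        Ch * ((2:ℝ)^ℓ * dist y y')^ε₁ * (dist u u' / (sc ℓ + dist z u))^β *
          sz μ z u (sc ℓ) γ := by
  obtain ⟨Cs, hCs0, hCs⟩ := key_size hC₁ hn hb hd hε₁ hC₄ hS hγ hγ₂
  have hC₁0 : (0:ℝ) < C₁ := by linarith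
  set A₁ : ℝ := (1+1)^γ * (2*(C₁*(1+2*1)^n)) with hA₁def
  set A₂ : ℝ := (1+2)^γ * (2*(C₁*(1+2*2)^n)) with hA₂def
  set B₂ : ℝ := (2:ℝ)^γ * (1 + C₁*(2*2)^n) with hB₂def
  have hA₁0 : 0 < A₁ := by
    rw [hA₁def]
    have h1 : (0:ℝ) < (1+1:ℝ)^γ := Real.rpow_pos_of_pos (by norm_num) γ
    have h2 : (0:ℝ) < (1+2*1:ℝ)^n := Real.rpow_pos_of_pos (by norm_num) n
    positivity
  have hA₂0 : 0 < A₂ := by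
    rw [hA₂def]
    have h1 : (0:ℝ) < (1+2:ℝ)^γ := Real.rpow_pos_of_pos (by norm_num) γ
    have h2 : (0:ℝ) < (1+2*2:ℝ)^n := Real.rpow_pos_of_pos (by norm_num) n
    positivity
  have hB₂0 : 0 < B₂ := by
    rw [hB₂def]
    have h1 : (0:ℝ) < (2:ℝ)^γ := Real.rpow_pos_of_pos (by norm_num) γ
    have h2 : (0:ℝ) < (2*2:ℝ)^n := Real.rpow_pos_of_pos (by norm_num) n
    positivity
  clear_value A₁ A₂ B₂
  refine ⟨2*C₄*A₁ + 6*Cs*(1+B₂) +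
    3*(3*C₄*A₁ + 3*C₄*A₂ + 8*C₄*A₂*(1+B₂)), by positivity, ?_⟩
  set Ch : ℝ := 2*C₄*A₁ + 6*Cs*(1+B₂) + 3*(3*C₄*A₁ + 3*C₄*A₂ + 8*C₄*A₂*(1+B₂))
    with hChdef
  have hprods : 0 < C₄*A₁ ∧ 0 < C₄*A₂ ∧ 0 < C₄*A₂*B₂ ∧ 0 < Cs*B₂ := by
    refine ⟨mul_pos hC₄ hA₁0, mul_pos hC₄ hA₂0, ?_, mul_pos hCs0 hB₂0⟩
    exact mul_pos (mul_pos hC₄ hA₂0) hB₂0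
  clear_value Ch
  have hCh0 : 0 < Ch := by rw [hChdef]; positivity
  intro ℓ y y' z u u' hyy' hzy huu'
  set t := sc ℓ with htdef
  have ht : 0 < t := by rw [htdef]; unfold sc; positivity
  set d := dist y y' with hddef
  set p := dist u u' with hpdef
  set dzu := dist z u with hdzudef
  set dyu := dist y u with hdyudef
  clear_value t d p dzu dyu
  have hyy'1 : dist y y' ≤ sc ℓ := by rw [← hddef, ← htdef]; exact hyy'
  have hzy1 : dist z y ≤ sc ℓ := by rw [← htdef]; exact hzy
  have hd0 : 0 ≤ d := hddef ▸ dist_nonneg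
  have hp0 : 0 ≤ p := hpdef ▸ dist_nonneg
  have hdzu0 : 0 ≤ dzu := hdzudef ▸ dist_nonneg
  have hdyu0 : 0 ≤ dyu := hdyudef ▸ dist_nonneg
  have htzu : 0 < t + dzu := by linarith
  have htyu : 0 < t + dyu := by linarith
  have h2l : (2:ℝ)^ℓ * d = d / t := by
    rw [htdef]; unfold sc; rw [zpow_neg, div_eq_mul_inv, inv_inv, mul_comm]
  rw [h2l]
  have hdzu_le : dzu ≤ t + dyu := by
    have h := dist_triangle z y u
    rw [← hdzudef, ← hdyudef] at h
    linarith
  have htz2y : t + dzu ≤ 2*(t+dyu) := by linarith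
  have hQ0 : 0 ≤ p/(t+dzu) := div_nonneg hp0 htzu.le
  have hX0 : 0 ≤ (d/t)^ε₁ := Real.rpow_nonneg (div_nonneg hd0 ht.le) ε₁
  have hQb0 : 0 ≤ (p/(t+dzu))^β := Real.rpow_nonneg hQ0 β
  have hsz0 : 0 ≤ sz μ z u t γ := sz_nonneg μ z u ht.le γ
  have hRHS0 : 0 ≤ Ch * (d/t)^ε₁ * (p/(t+dzu))^β * sz μ z u t γ :=
    mul_nonneg (mul_nonneg (mul_nonneg hCh0.le hX0) hQb0) hsz0
  by_cases hy : y = y'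
  · subst hy; simp only [sub_self, norm_zero]; exact hRHS0
  by_cases hu : u = u'
  · subst hu; simp only [sub_self, norm_zero]; exact hRHS0
  have hdpos : 0 < d := by rw [hddef]; exact dist_pos.2 hy
  have hppos : 0 < p := by rw [hpdef]; exact dist_pos.2 hu
  -- comparison of sz with center y resp. y'
  have hsz_y : ∀ ε', γ ≤ ε' → sz μ y u t ε' ≤ A₁ * sz μ z u t γ := by
    intro ε' hγε'
    rw [hA₁def]
    exact sz_le hb hd hC₁ hn ht le_rfl hγ hγε' y z u (by rw [one_mul]; exact hzy)
  have hzy' : dist z y' ≤ 2 * t := by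
    calc dist z y' ≤ dist z y + dist y y' := dist_triangle z y y'
      _ ≤ 2 * t := by rw [← hddef]; linarith
  have hsz_y' : ∀ v : X, sz μ y' v t ε₂ ≤ A₂ * sz μ z v t γ := by
    intro v
    rw [hA₂def]
    exact sz_le hb hd hC₁ hn ht (by norm_num) hγ hγ₂ y' z v hzy'
  -- shift from u' to u
  have hshift : sz μ z u' t γ ≤ B₂ * sz μ z u t γ := by
    have hk : t + dist z u ≤ 2 * (t + dist z u') := by
      rw [← hdzudef]
      have h := dist_triangle z u' u
      rw [← hdzudef] at h
      have h2 : dist u' u = p := by rw [hpdef, dist_comm]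
      rw [h2] at h
      linarith
    rw [hB₂def]
    exact sz_shift hb hd hC₁ hn ht (by norm_num) hγ z u u' hk
  -- generic upper bound factor manipulation for p/(t+dyu)
  have hfac2 : ∀ {s : ℝ}, 0 ≤ s → p ≤ t + s → t + dzu ≤ 3*(t+s) →
      (p/(t+s))^ε₁ ≤ 3 * (p/(t+dzu))^β := by
    intro s hs hps h3s
    have hts : 0 < t + s := by linarith
    have e1 : (p/(t+s))^ε₁ ≤ (p/(t+s))^β := by
      apply Real.rpow_le_rpow_of_exponent_ge (div_pos hppos hts) _ hβ₁
      rw [div_le_one hts]; linarith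
    have e2 : (p/(t+s))^β ≤ ((3:ℝ)*(p/(t+dzu)))^β := by
      apply Real.rpow_le_rpow (div_nonneg hp0 hts.le) _ hβ.le
      rw [← mul_div_assoc, div_le_div_iff₀ hts htzu]
      linarith [mul_le_mul_of_nonneg_left h3s hp0]
    have e3 : ((3:ℝ)*(p/(t+dzu)))^β = 3^β * (p/(t+dzu))^β :=
      Real.mul_rpow (by norm_num) hQ0
    have e4 : (3:ℝ)^β ≤ 3 := by
      calc (3:ℝ)^β ≤ (3:ℝ)^(1:ℝ) :=
            Real.rpow_le_rpow_of_exponent_le (by norm_num) (hβ₁.trans hε₁.2)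
        _ = 3 := Real.rpow_one 3
    calc (p/(t+s))^ε₁ ≤ (p/(t+s))^β := e1
      _ ≤ 3^β * (p/(t+dzu))^β := by rw [← e3]; exact e2
      _ ≤ 3 * (p/(t+dzu))^β := mul_le_mul_of_nonneg_right e4 hQb0
  rcases le_or_gt p ((t+dyu)/3) with hp3 | hp3
  · rcases le_or_gt d ((t+dyu)/3) with hd3 | hd3
    · -- case i : double difference estimate
      have h1 := hS.second_diff ℓ y y' u u'
        (by rw [← htdef, ← hddef, ← hdyudef]; exact hd3)
        (by rw [← htdef, ← hpdef, ← hdyudef]; exact hp3)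
      rw [← htdef, ← hddef, ← hpdef, ← hdyudef] at h1
      have hLHS : S ℓ y u - S ℓ y' u - (S ℓ y u' - S ℓ y' u') =
          S ℓ y u - S ℓ y u' - (S ℓ y' u - S ℓ y' u') := by ring
      rw [hLHS]
      have f1 : (d/(t+dyu))^ε₁ ≤ (d/t)^ε₁ := by
        apply Real.rpow_le_rpow (div_nonneg hd0 htyu.le) _ hε₁.1.le
        rw [div_le_div_iff₀ htyu ht]
        linarith [mul_nonneg hd0 hdyu0]
      have f2 : (p/(t+dyu))^ε₁ ≤ 3 * (p/(t+dzu))^β :=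
        hfac2 (by linarith) (by linarith) (by linarith)
      have f3 : sz μ y u t ε₃ ≤ A₁ * sz μ z u t γ := hsz_y ε₃ hγ₃
      calc ‖S ℓ y u - S ℓ y u' - (S ℓ y' u - S ℓ y' u')‖
          ≤ C₄ * (d/(t+dyu))^ε₁ * (p/(t+dyu))^ε₁ * sz μ y u t ε₃ := h1
        _ ≤ C₄ * (d/t)^ε₁ * (3 * (p/(t+dzu))^β) * (A₁ * sz μ z u t γ) :=
            mul_le_mul₄ le_rfl f1 f2 f3
              (Real.rpow_nonneg (div_nonneg hd0 htyu.le) ε₁)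
              (Real.rpow_nonneg (div_nonneg hp0 htyu.le) ε₁)
              (sz_nonneg μ y u ht.le ε₃) hC₄.le hX0 (by positivity)
        _ = (3*C₄*A₁) * (d/t)^ε₁ * (p/(t+dzu))^β * sz μ z u t γ := by ring
        _ ≤ Ch * (d/t)^ε₁ * (p/(t+dzu))^β * sz μ z u t γ := by
            apply mul_le_mul₄ _ le_rfl le_rfl le_rfl hX0 hQb0 hsz0 hCh0.le hX0 hQb0
            rw [hChdef]
            linarith [hprods.1, hprods.2.1, hprods.2.2.1, hprods.2.2.2, hCs0]
    · -- case iii : d large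
      have hlb3 : (1:ℝ)/3 ≤ (d/t)^ε₁ := by
        apply rpow_lb (by norm_num) (by norm_num) _ hε₁.1 hε₁.2
        rw [le_div_iff₀ ht]; linarith
      have hre : S ℓ y u - S ℓ y' u - (S ℓ y u' - S ℓ y' u') =
          (S ℓ y u - S ℓ y u') - (S ℓ y' u - S ℓ y' u') := by ring
      rw [hre]
      -- term 1
      have hT1 : ‖S ℓ y u - S ℓ y u'‖ ≤
          (3*C₄*A₁) * (p/(t+dzu))^β * sz μ z u t γ := by
        have h1 := hS.holder_snd ℓ y u u'
          (by rw [← htdef, ← hpdef, ← hdyudef]; linarith)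
        rw [← htdef, ← hpdef, ← hdyudef] at h1
        have f2 : (p/(t+dyu))^ε₁ ≤ 3 * (p/(t+dzu))^β :=
          hfac2 (by linarith) (by linarith) (by linarith)
        calc ‖S ℓ y u - S ℓ y u'‖
            ≤ C₄ * (p/(t+dyu))^ε₁ * sz μ y u t ε₂ := h1
          _ ≤ C₄ * (3 * (p/(t+dzu))^β) * (A₁ * sz μ z u t γ) :=
              mul_le_mul₃ le_rfl f2 (hsz_y ε₂ hγ₂)
                (Real.rpow_nonneg (div_nonneg hp0 htyu.le) ε₁)
                (sz_nonneg μ y u ht.le ε₂) hC₄.le (by positivity)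
          _ = (3*C₄*A₁) * (p/(t+dzu))^β * sz μ z u t γ := by ring
      -- term 2
      have hT2 : ‖S ℓ y' u - S ℓ y' u'‖ ≤
          (3*C₄*A₂ + 8*C₄*A₂*(1+B₂)) * (p/(t+dzu))^β * sz μ z u t γ := by
        set dy'u := dist y' u with hdy'udef
        have hdy'u0 : 0 ≤ dy'u := dist_nonneg
        have hty'u : 0 < t + dy'u := by linarith
        have htz3 : t + dzu ≤ 3*(t + dy'u) := by
          have h := dist_triangle z y' u
          rw [← hdzudef, ← hdy'udef] at h
          have h2 := hzy'
          linarith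
        rcases le_or_gt p ((t + dy'u)/2) with hp2 | hp2
        · have h1 := hS.holder_snd ℓ y' u u'
            (by rw [← htdef, ← hpdef, ← hdy'udef]; exact hp2)
          rw [← htdef, ← hpdef, ← hdy'udef] at h1
          have f2 : (p/(t+dy'u))^ε₁ ≤ 3 * (p/(t+dzu))^β :=
            hfac2 (by linarith) (by linarith) htz3
          have hmono : (3*C₄*A₂) * (p/(t+dzu))^β * sz μ z u t γ ≤
              (3*C₄*A₂ + 8*C₄*A₂*(1+B₂)) * (p/(t+dzu))^β * sz μ z u t γ := by
            apply mul_le_mul₃ _ le_rfl le_rfl hQb0 hsz0 (by positivity) hQb0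
            linarith [hprods.2.1, hprods.2.2.1]
          refine le_trans ?_ hmono
          calc ‖S ℓ y' u - S ℓ y' u'‖
              ≤ C₄ * (p/(t+dy'u))^ε₁ * sz μ y' u t ε₂ := h1
            _ ≤ C₄ * (3 * (p/(t+dzu))^β) * (A₂ * sz μ z u t γ) :=
                mul_le_mul₃ le_rfl f2 (hsz_y' u)
                  (Real.rpow_nonneg (div_nonneg hp0 hty'u.le) ε₁)
                  (sz_nonneg μ y' u ht.le ε₂) hC₄.le (by positivity)
            _ = (3*C₄*A₂) * (p/(t+dzu))^β * sz μ z u t γ := by ring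
        · -- p very large compared to t + d(y',u)
          have hQ8 : (1:ℝ)/8 ≤ (p/(t+dzu))^β := by
            apply rpow_lb (by norm_num) (by norm_num) _ hβ (hβ₁.trans hε₁.2)
            rw [le_div_iff₀ htzu]; linarith
          have h2 := hS.size ℓ y' u
          have h3 := hS.size ℓ y' u'
          rw [← htdef] at h2 h3
          have g1 : sz μ y' u t ε₂ ≤ A₂ * sz μ z u t γ := hsz_y' u
          have g2 : sz μ y' u' t ε₂ ≤ A₂ * (B₂ * sz μ z u t γ) := by
            calc sz μ y' u' t ε₂ ≤ A₂ * sz μ z u' t γ := hsz_y' u'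
              _ ≤ A₂ * (B₂ * sz μ z u t γ) :=
                  mul_le_mul_of_nonneg_left hshift hA₂0.le
          have hW : ‖S ℓ y' u - S ℓ y' u'‖ ≤ C₄*A₂*(1+B₂) * sz μ z u t γ := by
            calc ‖S ℓ y' u - S ℓ y' u'‖ ≤ ‖S ℓ y' u‖ + ‖S ℓ y' u'‖ := norm_sub_le _ _
              _ ≤ C₄ * (A₂ * sz μ z u t γ) + C₄ * (A₂ * (B₂ * sz μ z u t γ)) := by
                  have g3 := mul_le_mul_of_nonneg_left g1 hC₄.le
                  have g4 := mul_le_mul_of_nonneg_left g2 hC₄.le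
                  linarith
              _ = C₄*A₂*(1+B₂) * sz μ z u t γ := by ring
          have hkey : C₄*A₂*(1+B₂) * sz μ z u t γ ≤
              (3*C₄*A₂ + 8*C₄*A₂*(1+B₂)) * (p/(t+dzu))^β * sz μ z u t γ := by
            apply mul_le_mul_of_nonneg_right _ hsz0
            have h := mul_le_mul_of_nonneg_left hQ8 (by positivity :
              (0:ℝ) ≤ 8*(C₄*A₂*(1+B₂)))
            linarith [mul_nonneg (by positivity : (0:ℝ) ≤ 3*C₄*A₂) hQb0]
          exact hW.trans hkey
      -- combine the two terms, then absorb (d/t)^ε₁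
      have hsum : ‖S ℓ y u - S ℓ y u' - (S ℓ y' u - S ℓ y' u')‖ ≤
          (3*C₄*A₁ + 3*C₄*A₂ + 8*C₄*A₂*(1+B₂)) * (p/(t+dzu))^β * sz μ z u t γ := by
        have h := norm_sub_le (S ℓ y u - S ℓ y u') (S ℓ y' u - S ℓ y' u')
        calc ‖S ℓ y u - S ℓ y u' - (S ℓ y' u - S ℓ y' u')‖
            ≤ ‖S ℓ y u - S ℓ y u'‖ + ‖S ℓ y' u - S ℓ y' u'‖ := h
          _ ≤ (3*C₄*A₁ + 3*C₄*A₂ + 8*C₄*A₂*(1+B₂)) * (p/(t+dzu))^β *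
              sz μ z u t γ := by
            linarith [hT1, hT2]
      have habs : (3*C₄*A₁ + 3*C₄*A₂ + 8*C₄*A₂*(1+B₂)) * (p/(t+dzu))^β *
          sz μ z u t γ ≤ Ch * (d/t)^ε₁ * (p/(t+dzu))^β * sz μ z u t γ := by
        have hE : (0:ℝ) < 3*C₄*A₁ + 3*C₄*A₂ + 8*C₄*A₂*(1+B₂) := by positivity
        have h1 : (3*C₄*A₁ + 3*C₄*A₂ + 8*C₄*A₂*(1+B₂)) ≤
            Ch * (d/t)^ε₁ := by
          have h := mul_le_mul_of_nonneg_left hlb3 hCh0.le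
          have h0 : (3*C₄*A₁ + 3*C₄*A₂ + 8*C₄*A₂*(1+B₂)) ≤ Ch * (1/3) := by
            rw [hChdef]
            linarith [hprods.1, hprods.2.1, hprods.2.2.1, hprods.2.2.2, hCs0]
          linarith
        calc (3*C₄*A₁ + 3*C₄*A₂ + 8*C₄*A₂*(1+B₂)) * (p/(t+dzu))^β * sz μ z u t γ
            ≤ (Ch * (d/t)^ε₁) * (p/(t+dzu))^β * sz μ z u t γ :=
              mul_le_mul₃ h1 le_rfl le_rfl hQb0 hsz0 (by positivity) hQb0
          _ = Ch * (d/t)^ε₁ * (p/(t+dzu))^β * sz μ z u t γ := by ring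
      exact hsum.trans habs
  · -- case ii : p large, use the size estimate at u and u'
    have hQ6 : (1:ℝ)/6 ≤ (p/(t+dzu))^β := by
      apply rpow_lb (by norm_num) (by norm_num) _ hβ (hβ₁.trans hε₁.2)
      rw [le_div_iff₀ htzu]; linarith
    have b1 := hCs ℓ y y' z u hyy'1 hzy1
    have b2 := hCs ℓ y y' z u' hyy'1 hzy1
    rw [← htdef, ← hddef, h2l] at b1 b2
    have b2' : ‖S ℓ y u' - S ℓ y' u'‖ ≤ Cs * (d/t)^ε₁ * (B₂ * sz μ z u t γ) := by
      calc ‖S ℓ y u' - S ℓ y' u'‖ ≤ Cs * (d/t)^ε₁ * sz μ z u' t γ := b2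
        _ ≤ Cs * (d/t)^ε₁ * (B₂ * sz μ z u t γ) :=
            mul_le_mul_of_nonneg_left hshift (by positivity)
    have hsum : ‖S ℓ y u - S ℓ y' u - (S ℓ y u' - S ℓ y' u')‖ ≤
        Cs * (1+B₂) * (d/t)^ε₁ * sz μ z u t γ := by
      calc ‖S ℓ y u - S ℓ y' u - (S ℓ y u' - S ℓ y' u')‖
          ≤ ‖S ℓ y u - S ℓ y' u‖ + ‖S ℓ y u' - S ℓ y' u'‖ := norm_sub_le _ _
        _ ≤ Cs * (1+B₂) * (d/t)^ε₁ * sz μ z u t γ := by linarith [b1, b2']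
    have habs : Cs * (1+B₂) * (d/t)^ε₁ * sz μ z u t γ ≤
        Ch * (d/t)^ε₁ * (p/(t+dzu))^β * sz μ z u t γ := by
      have h1 : Cs * (1+B₂) ≤ Ch * (p/(t+dzu))^β := by
        have h := mul_le_mul_of_nonneg_left hQ6 hCh0.le
        have h0 : Cs * (1+B₂) ≤ Ch * (1/6) := by
          rw [hChdef]
          linarith [hprods.1, hprods.2.1, hprods.2.2.1, hprods.2.2.2, hCs0]
        linarith
      calc Cs * (1+B₂) * (d/t)^ε₁ * sz μ z u t γ
          = (Cs * (1+B₂)) * (d/t)^ε₁ * sz μ z u t γ := by ring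
        _ ≤ (Ch * (p/(t+dzu))^β) * (d/t)^ε₁ * sz μ z u t γ :=
            mul_le_mul₃ h1 le_rfl le_rfl hX0 hsz0 (by positivity) hX0
        _ = Ch * (d/t)^ε₁ * (p/(t+dzu))^β * sz μ z u t γ := by ring
    exact hsum.trans habs


/-- Key estimate for `J₁` in the proof of Theorem 3.2(ii): test-norm regularity of an AOTI
kernel in its first variable,
`‖S_ℓ(y,·) − S_ℓ(y',·)‖_{G(z, 2^{-ℓ}, β, γ)} ≤ C (2^ℓ d(y,y'))^{ε₁}`. -/
theorem aoti_first_variable_test_norm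
    {X : Type*} [MetricSpace X] [MeasurableSpace X] [BorelSpace X]
    (μ : Measure X) (C₁ n : ℝ) (hC₁ : 1 ≤ C₁) (hn : 0 < n)
    (hballs : BallsFinitePos μ) (hdoub : Doubling μ C₁ n)
    (ε₁ ε₂ ε₃ C₄ : ℝ) (hε₁ : 0 < ε₁ ∧ ε₁ ≤ 1) (hε₂ : 0 < ε₂) (hε₃ : 0 < ε₃) (hC₄ : 0 < C₄)
    (S : ℤ → X → X → ℂ) (hS : IsAOTI μ C₄ ε₁ ε₂ ε₃ S)
    (ε β γ : ℝ) (hε : 0 < ε ∧ ε < min ε₁ (min ε₂ ε₃))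
    (hβ : 0 < β ∧ β < ε) (hγ : 0 < γ ∧ γ < ε) :
    ∃ C : ℝ, 0 < C ∧ ∀ (ℓ : ℤ) (y y' z : X),
      dist y y' ≤ sc ℓ → dist z y ≤ sc ℓ →
      TestBound μ z (sc ℓ) β γ (fun u => S ℓ y u - S ℓ y' u)
        (C * ((2 : ℝ) ^ ℓ * dist y y') ^ ε₁) := by
  have hβ₁ : β ≤ ε₁ := le_of_lt (hβ.2.trans (lt_of_lt_of_le hε.2 (min_le_left _ _)))
  have hγ₂ : γ ≤ ε₂ := le_of_lt (hγ.2.trans (lt_of_lt_of_le hε.2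
    ((min_le_right _ _).trans (min_le_left _ _))))
  have hγ₃ : γ ≤ ε₃ := le_of_lt (hγ.2.trans (lt_of_lt_of_le hε.2
    ((min_le_right _ _).trans (min_le_right _ _))))
  obtain ⟨Cs, hCs0, hCs⟩ := key_size hC₁ hn hballs hdoub hε₁ hC₄ hS hγ.1 hγ₂
  obtain ⟨Ch, hCh0, hCh⟩ :=
    key_holder hC₁ hn hballs hdoub hε₁ hC₄ hS hβ.1 hβ₁ hγ.1 hγ₂ hγ₃
  refine ⟨Cs + Ch, by positivity, ?_⟩
  intro ℓ y y' z hyy' hzy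
  have ht : 0 < sc ℓ := by unfold sc; positivity
  have hX0 : 0 ≤ ((2:ℝ)^ℓ * dist y y')^ε₁ :=
    Real.rpow_nonneg (mul_nonneg (by positivity) dist_nonneg) ε₁
  constructor
  · intro u
    calc ‖(fun u => S ℓ y u - S ℓ y' u) u‖
        = ‖S ℓ y u - S ℓ y' u‖ := rfl
      _ ≤ Cs * ((2:ℝ)^ℓ * dist y y')^ε₁ * sz μ z u (sc ℓ) γ :=
          hCs ℓ y y' z u hyy' hzy
      _ ≤ (Cs + Ch) * ((2:ℝ)^ℓ * dist y y')^ε₁ * sz μ z u (sc ℓ) γ :=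
          mul_le_mul₃ (by linarith) le_rfl le_rfl hX0 (sz_nonneg μ z u ht.le γ)
            (by positivity) hX0
  · intro u u' hcond
    have hQb0 : 0 ≤ (dist u u' / (sc ℓ + dist z u))^β := by
      apply Real.rpow_nonneg
      apply div_nonneg dist_nonneg
      linarith [dist_nonneg (x := z) (y := u)]
    calc ‖(fun u => S ℓ y u - S ℓ y' u) u - (fun u => S ℓ y u - S ℓ y' u) u'‖
        = ‖S ℓ y u - S ℓ y' u - (S ℓ y u' - S ℓ y' u')‖ := rfl
      _ ≤ Ch * ((2:ℝ)^ℓ * dist y y')^ε₁ * (dist u u' / (sc ℓ + dist z u))^β *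
            sz μ z u (sc ℓ) γ := hCh ℓ y y' z u u' hyy' hzy hcond
      _ ≤ (Cs + Ch) * ((2:ℝ)^ℓ * dist y y')^ε₁ * (dist u u' / (sc ℓ + dist z u))^β *
            sz μ z u (sc ℓ) γ :=
          mul_le_mul₄ (by linarith) le_rfl le_rfl le_rfl hX0 hQb0
            (sz_nonneg μ z u ht.le γ) (by positivity) hX0 hQb0

end RDHardy
end
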